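/- arXiv:1808.07376 — 6 statements merged into one kernel-verified Lean document; each statement's English description precedes it below -/
import Mathlib

section
/- If an observable T on state space S can be measured without disturbance (i.e., there exist operations Φ_i with Σ_i Φ_i = id and u∘Φ_i = T_i), then T is compatible with every observable A on S: the effects G_{ij} = A_j ∘ Φ_i define a joint observable. -/
/-- An effect on a state space `S`. -/
def IsEffect {V : Type*} [AddCommGroup V] [Module ℝ V]
    (S : Set V) (e : V →ₗ[ℝ] ℝ) : Prop :=
  ∀ s ∈ S, 0 ≤ e s ∧ e s ≤ 1

/-- An observable with finite outcome set `ι`. -/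
def IsObservable {V : Type*} [AddCommGroup V] [Module ℝ V]
    (S : Set V) (u : V →ₗ[ℝ] ℝ) {ι : Type*} [Fintype ι]
    (A : ι → (V →ₗ[ℝ] ℝ)) : Prop :=
  (∀ i, IsEffect S (A i)) ∧ ∑ i, A i = u

/-- Joint-observable compatibility of two observables. -/
def Compatible {V : Type*} [AddCommGroup V] [Module ℝ V]
    (S : Set V) (u : V →ₗ[ℝ] ℝ) {ι κ : Type*} [Fintype ι] [Fintype κ]
    (A : ι → (V →ₗ[ℝ] ℝ)) (B : κ → (V →ₗ[ℝ] ℝ)) : Prop :=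
  ∃ G : ι × κ → (V →ₗ[ℝ] ℝ), IsObservable S u G ∧
    (∀ i, ∑ j, G (i, j) = A i) ∧ (∀ j, ∑ i, G (i, j) = B j)

/-- An operation: a (linearly extended) map sending states into the subnormalized
states, i.e. into `{x ≥ 0 : u x ≤ 1}`, where `x ≥ 0` means `x` lies in the cone
generated by `S`. -/
def IsOperation {V : Type*} [AddCommGroup V] [Module ℝ V]
    (S : Set V) (u : V →ₗ[ℝ] ℝ) (Φ : V →ₗ[ℝ] V) : Prop :=
  ∀ s ∈ S, (∃ c : ℝ, 0 ≤ c ∧ ∃ t ∈ S, Φ s = c • t) ∧ u (Φ s) ≤ 1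

/-!
Measure `A` after the nondisturbing instrument `Φ`. Each `A j ∘ Φ i` is an effect because
`Φ i` maps a state `s` to a multiple `c • t` of a state with `c = u (Φ i s) ≤ 1`. The
`i`-marginal collapses through `∑ i, Φ i = id`, the `j`-marginal through `∑ j, A j = u`.
-/

section Instrument

variable {V : Type*} [AddCommGroup V] [Module ℝ V] {S : Set V} {u : V →ₗ[ℝ] ℝ}

theorem IsEffect.comp_of_isOperation (hu : ∀ s ∈ S, u s = 1) {e : V →ₗ[ℝ] ℝ}
    (he : IsEffect S e) {Φ : V →ₗ[ℝ] V} (hΦ : IsOperation S u Φ) :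
    IsEffect S (e.comp Φ) := by
  intro s hs
  obtain ⟨⟨c, hc, t, ht, hΦs⟩, hΦu⟩ := hΦ s hs
  have hc_le : c ≤ 1 := by simpa [hΦs, hu t ht] using hΦu
  obtain ⟨het₀, het₁⟩ := he t ht
  simp only [LinearMap.comp_apply, hΦs, map_smul, smul_eq_mul]
  exact ⟨mul_nonneg hc het₀, by nlinarith⟩

theorem sum_comp_eq_of_sum_eq_id {ι : Type*} [Fintype ι] (e : V →ₗ[ℝ] ℝ)
    {Φ : ι → V →ₗ[ℝ] V} (hΦ : ∑ i, Φ i = LinearMap.id) :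
    ∑ i, e.comp (Φ i) = e := by
  ext x
  simpa [LinearMap.sum_apply] using congrArg (fun f => e (f x)) hΦ

theorem IsObservable.sum_comp {κ : Type*} [Fintype κ] {A : κ → V →ₗ[ℝ] ℝ}
    (hA : IsObservable S u A) (Φ : V →ₗ[ℝ] V) :
    ∑ j, (A j).comp Φ = u.comp Φ := by
  ext x
  simp [LinearMap.sum_apply, ← hA.2]

theorem IsObservable.comp_operations (hu : ∀ s ∈ S, u s = 1)
    {ι κ : Type*} [Fintype ι] [Fintype κ] {A : κ → V →ₗ[ℝ] ℝ} (hA : IsObservable S u A)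
    {Φ : ι → V →ₗ[ℝ] V} (hΦop : ∀ i, IsOperation S u (Φ i))
    (hΦsum : ∑ i, Φ i = LinearMap.id) :
    IsObservable S u (fun q : ι × κ => (A q.2).comp (Φ q.1)) := by
  refine ⟨fun q => (hA.1 q.2).comp_of_isOperation hu (hΦop q.1), ?_⟩
  rw [Fintype.sum_prod_type_right]
  simp only [sum_comp_eq_of_sum_eq_id _ hΦsum]
  exact hA.2

end Instrument

theorem nondisturbing_implies_compatible_with_all_general
    {V : Type*} [AddCommGroup V] [Module ℝ V]
    (S : Set V)
    (u : V →ₗ[ℝ] ℝ) (hu : ∀ s ∈ S, u s = 1)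
    {k l : ℕ}
    (T : Fin k → (V →ₗ[ℝ] ℝ))
    (Φ : Fin k → (V →ₗ[ℝ] V)) (hΦop : ∀ i, IsOperation S u (Φ i))
    (hΦsum : ∑ i, Φ i = LinearMap.id)
    (hΦT : ∀ i, u.comp (Φ i) = T i)
    (A : Fin l → (V →ₗ[ℝ] ℝ)) (hA : IsObservable S u A) :
    IsObservable S u (fun q : Fin k × Fin l => (A q.2).comp (Φ q.1)) ∧
    (∀ i, ∑ j, (A j).comp (Φ i) = T i) ∧
    (∀ j, ∑ i, (A j).comp (Φ i) = A j) ∧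
    Compatible S u T A := by
  have hG := hA.comp_operations hu hΦop hΦsum
  have hmargT : ∀ i, ∑ j, (A j).comp (Φ i) = T i := fun i =>
    (hA.sum_comp (Φ i)).trans (hΦT i)
  have hmargA : ∀ j, ∑ i, (A j).comp (Φ i) = A j := fun j =>
    sum_comp_eq_of_sum_eq_id (A j) hΦsum
  exact ⟨hG, hmargT, hmargA, _, hG, hmargT, hmargA⟩

/-- If an observable `T` can be measured without disturbance (there are
operations `Φ i` with `∑ i, Φ i = id` and `u ∘ Φ i = T i`), then `T` is compatible
with every observable `A`; the effects `G (i,j) = A j ∘ Φ i` form a joint observable. -/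
theorem nondisturbing_implies_compatible_with_all
    {V : Type*} [AddCommGroup V] [Module ℝ V] [FiniteDimensional ℝ V]
    (S : Set V) (hSne : S.Nonempty) (hScvx : Convex ℝ S)
    (u : V →ₗ[ℝ] ℝ) (hu : ∀ s ∈ S, u s = 1)
    {k l : ℕ}
    (T : Fin k → (V →ₗ[ℝ] ℝ)) (hT : IsObservable S u T)
    (Φ : Fin k → (V →ₗ[ℝ] V)) (hΦop : ∀ i, IsOperation S u (Φ i))
    (hΦsum : ∑ i, Φ i = LinearMap.id)
    (hΦT : ∀ i, u.comp (Φ i) = T i)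
    (A : Fin l → (V →ₗ[ℝ] ℝ)) (hA : IsObservable S u A) :
    IsObservable S u (fun q : Fin k × Fin l => (A q.2).comp (Φ q.1)) ∧
    (∀ i, ∑ j, (A j).comp (Φ i) = T i) ∧
    (∀ j, ∑ i, (A j).comp (Φ i) = A j) ∧
    Compatible S u T A :=
  nondisturbing_implies_compatible_with_all_general S u hu T Φ hΦop hΦsum hΦT A hA
end

section
/- Let 0 < λ ≤ 1 and 0 ≤ μ ≤ 1. An effect f belongs to T̃_2 if and only if λf + (1−λ)μu belongs to T̃_2. In other words, the set of non-disturbing effects is invariant under adding and removing trivial noise. -/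
/-- The non-disturbance condition on an effect `f` (membership in `T̃₂`): there exist
affinely independent extreme points `x₁,…,x_d` of `S` with `S ⊆ aff{x₁,…,x_d}` such
that for every extreme point `y = ∑ⱼ αⱼ xⱼ` of `S`, `αⱼ (f(xⱼ) − f(y)) = 0` for all `j`. -/
def InT2 {V : Type*} [NormedAddCommGroup V] [NormedSpace ℝ V]
    (S : Set V) (f : V →ₗ[ℝ] ℝ) : Prop :=
  ∃ (d : ℕ) (x : Fin d → V),
    (∀ j, x j ∈ Set.extremePoints ℝ S) ∧
    AffineIndependent ℝ x ∧
    S ⊆ affineSpan ℝ (Set.range x) ∧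
    ∀ y ∈ Set.extremePoints ℝ S, ∀ α : Fin d → ℝ,
      (∑ j, α j = 1 ∧ y = ∑ j, α j • x j) →
      ∀ j, α j * (f (x j) - f y) = 0

/- Membership in `T̃₂` only involves the differences `f a - f b` of values at points of `S`.
Since `u ≡ 1` on `S`, adding noise multiplies every such difference by `λ ≠ 0`, which
preserves the vanishing of each product `αⱼ (f(xⱼ) − f(y))`. -/

theorem InT2.of_sub_eq_mul {V : Type*} [NormedAddCommGroup V] [NormedSpace ℝ V]
    {S : Set V} {f g : V →ₗ[ℝ] ℝ} (c : ℝ)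
    (hfg : ∀ a ∈ S, ∀ b ∈ S, g a - g b = c * (f a - f b)) (hf : InT2 S f) : InT2 S g := by
  obtain ⟨d, x, hx, hai, hspan, hnd⟩ := hf
  refine ⟨d, x, hx, hai, hspan, fun y hy α hα j => ?_⟩
  rw [hfg _ (hx j).1 _ hy.1, mul_left_comm, hnd y hy α hα j, mul_zero]

theorem inT2_iff_of_sub_eq_mul {V : Type*} [NormedAddCommGroup V] [NormedSpace ℝ V]
    {S : Set V} {f g : V →ₗ[ℝ] ℝ} {c : ℝ} (hc : c ≠ 0)
    (hfg : ∀ a ∈ S, ∀ b ∈ S, g a - g b = c * (f a - f b)) : InT2 S f ↔ InT2 S g :=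
  ⟨InT2.of_sub_eq_mul c hfg, InT2.of_sub_eq_mul c⁻¹ fun a ha b hb => by
    rw [hfg a ha b hb, inv_mul_cancel_left₀ hc]⟩

theorem sub_noisy_effect {V : Type*} [AddCommGroup V] [Module ℝ V] {S : Set V}
    {u : V →ₗ[ℝ] ℝ} (hu : ∀ s ∈ S, u s = 1) (f : V →ₗ[ℝ] ℝ) (lam k : ℝ)
    {a b : V} (ha : a ∈ S) (hb : b ∈ S) :
    (lam • f + k • u) a - (lam • f + k • u) b = lam * (f a - f b) := by
  simp only [LinearMap.add_apply, LinearMap.smul_apply, smul_eq_mul, hu a ha, hu b hb]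
  ring

theorem T2_noise_invariant_general
    {V : Type*} [NormedAddCommGroup V] [NormedSpace ℝ V]
    (S : Set V)
    (u : V →ₗ[ℝ] ℝ) (hu : ∀ s ∈ S, u s = 1)
    (f : V →ₗ[ℝ] ℝ)
    (lam mu : ℝ) (hlam0 : 0 < lam) :
    InT2 S f ↔ InT2 S (lam • f + ((1 - lam) * mu) • u) :=
  inT2_iff_of_sub_eq_mul hlam0.ne' fun _ ha _ hb => sub_noisy_effect hu f lam _ ha hb

/-- Prop. 4: for `0 < λ ≤ 1` and `0 ≤ μ ≤ 1`, an effect `f` belongs to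
`T̃₂` iff the noisy effect `λ f + (1−λ) μ u` belongs to `T̃₂`. -/
theorem T2_noise_invariant
    {V : Type*} [NormedAddCommGroup V] [NormedSpace ℝ V] [FiniteDimensional ℝ V]
    (S : Set V) (hSne : S.Nonempty) (hScvx : Convex ℝ S) (hScpt : IsCompact S)
    (u : V →ₗ[ℝ] ℝ) (hu : ∀ s ∈ S, u s = 1)
    (f : V →ₗ[ℝ] ℝ) (hf : IsEffect S f)
    (lam mu : ℝ) (hlam0 : 0 < lam) (hlam1 : lam ≤ 1) (hmu0 : 0 ≤ mu) (hmu1 : mu ≤ 1) :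
    InT2 S f ↔ InT2 S (lam • f + ((1 - lam) * mu) • u) :=
  T2_noise_invariant_general S u hu f lam mu hlam0
end

section
/- An effect f on a state space S belongs to T̃_2 (satisfies the non-disturbance condition) if and only if S decomposes as a direct sum S = ⊕_{k=1}^N S_k of state spaces and f is constant on each summand S_k. -/
/-- `S` decomposes as the direct sum of the state spaces `Sk 0 ⊕ ⋯ ⊕ Sk (N-1)`:
each summand is a nonempty closed convex subset of `S`, and every state `x ∈ S` has a
unique decomposition `x = ∑ₖ vₖ` with each `vₖ` a nonnegative multiple of a state of
`Sk k` (equivalently, `x = ∑ₖ λₖ • xₖ` with unique weighted components `λₖ • xₖ`). -/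
def IsDirectSumDecomp {V : Type*} [NormedAddCommGroup V] [NormedSpace ℝ V]
    (S : Set V) {N : ℕ} (Sk : Fin N → Set V) : Prop :=
  (∀ k, (Sk k).Nonempty ∧ Convex ℝ (Sk k) ∧ IsClosed (Sk k) ∧ Sk k ⊆ S) ∧
  ∀ x ∈ S, ∃! v : Fin N → V,
    (∀ k, ∃ c : ℝ, 0 ≤ c ∧ ∃ s ∈ Sk k, v k = c • s) ∧ x = ∑ k, v k

/-
If `f ∈ T̃₂` with witness basis `x₁, …, x_d` (linearly independent, since every state has
`u = 1`), group the `xⱼ` by the value of `f`. The non-disturbance condition says that every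
extreme point lies in the span `W_k` of a single group, so by Krein–Milman `S` lies in the convex
hull of the pieces `S ∩ W_k`, and the independence of the `W_k` makes the decomposition unique.
Conversely, uniqueness of the decomposition of states extends to the cones over the summands,
which makes their spans independent. As `S` is the convex hull of the summands, each extreme point
of `S` lies in a single summand, and its coordinates in any affine basis of extreme points vanish
outside that summand, on which `f` is constant.
-/

theorem iSupIndep_iff_forall_sum_eq_zero {R M ι : Type*} [Ring R] [AddCommGroup M] [Module R M]
    [Fintype ι] {p : ι → Submodule R M} :
    iSupIndep p ↔ ∀ v : ι → M, (∀ i, v i ∈ p i) → ∑ i, v i = 0 → v = 0 := by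
  classical
  rw [iSupIndep_iff_finsetSum_eq_zero_imp_eq_zero]
  refine ⟨fun h v hv hv0 => funext fun i => h .univ v (fun i _ => hv i) hv0 i (Finset.mem_univ i),
    fun h s v hv hv0 i hi => ?_⟩
  have hext := h (fun j => if j ∈ s then v j else 0)
    (fun j => by split_ifs with hj; exacts [hv j hj, zero_mem _])
    (by rw [Finset.sum_ite_mem, Finset.univ_inter, hv0])
  simpa [hi] using congrFun hext i

theorem LinearIndependent.iSupIndep_span_fiber {R M ι η : Type*} [Ring R] [AddCommGroup M]
    [Module R M] {x : ι → M} (hx : LinearIndependent R x) (κ : ι → η) :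
    iSupIndep fun k => Submodule.span R (x '' (κ ⁻¹' {k})) := by
  rw [iSupIndep_def]
  intro k
  refine (hx.disjoint_span_image (s := κ ⁻¹' {k}) (t := κ ⁻¹' {k}ᶜ)
    (by rw [Set.preimage_compl]; exact disjoint_compl_right)).mono_right ?_
  exact iSup₂_le fun j hj => Submodule.span_mono (Set.image_mono fun i hi => by
    simp only [Set.mem_preimage, Set.mem_singleton_iff] at hi ⊢
    exact hi ▸ hj)

theorem iSupIndep.coeff_eq_zero_of_sum_mem {R M ι η : Type*} [Ring R] [AddCommGroup M]
    [Module R M] [Fintype ι] [Fintype η] {W : η → Submodule R M} (hW : iSupIndep W)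
    {x : ι → M} (hx : LinearIndependent R x) {κ : ι → η} (hκ : ∀ j, x j ∈ W (κ j))
    {α : ι → R} {k : η} (hk : ∑ j, α j • x j ∈ W k) {j : ι} (hj : κ j ≠ k) : α j = 0 := by
  classical
  set z : η → M := fun i =>
    (∑ j ∈ .univ with κ j = i, α j • x j) - Pi.single (M := fun _ => M) k (∑ j, α j • x j) i
  have hz : ∀ i, z i ∈ W i := fun i => by
    refine sub_mem (Submodule.sum_mem _ fun j hj => ?_) ?_
    · exact Submodule.smul_mem _ _ ((Finset.mem_filter.1 hj).2 ▸ hκ j)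
    · rcases eq_or_ne i k with rfl | hi
      · simpa using hk
      · simp [hi]
  have hfib := congrFun (iSupIndep_iff_forall_sum_eq_zero.1 hW z hz
    (by simp only [z, Finset.sum_sub_distrib, Finset.sum_fiberwise Finset.univ κ]; simp)) (κ j)
  simp only [z, Pi.single_apply, if_neg hj, sub_zero, Pi.zero_apply] at hfib
  exact linearIndependent_iff'.1 hx _ α hfib j (by simp)

theorem AffineIndependent.linearIndependent_of_map_eq_one {k V ι : Type*} [Ring k]
    [AddCommGroup V] [Module k V] {x : ι → V} (u : V →ₗ[k] k) (hx : ∀ i, u (x i) = 1)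
    (h : AffineIndependent k x) : LinearIndependent k x := by
  rw [linearIndependent_iff']
  intro s g hg i hi
  refine h.eq_zero_of_sum_eq_zero ?_ hg i hi
  simpa [hx] using congrArg u hg

theorem exists_sum_smul_eq_of_mem_affineSpan {k V ι : Type*} [Ring k] [AddCommGroup V]
    [Module k V] [Fintype ι] {x : ι → V} {y : V} (hy : y ∈ affineSpan k (Set.range x)) :
    ∃ α : ι → k, ∑ j, α j = 1 ∧ y = ∑ j, α j • x j := by
  obtain ⟨α, hα, rfl⟩ := eq_affineCombination_of_mem_affineSpan_of_fintype hy
  exact ⟨α, hα, Finset.univ.affineCombination_eq_linear_combination x α hα⟩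

theorem exists_fin_surjective_comp_injective {α β : Type*} [Fintype α] (g : α → β) :
    ∃ (N : ℕ) (κ : α → Fin N) (val : Fin N → β),
      Function.Surjective κ ∧ Function.Injective val ∧ ∀ a, g a = val (κ a) := by
  classical
  let e := (Finset.univ.image g).equivFin
  refine ⟨_, fun a => e ⟨g a, Finset.mem_image_of_mem g (Finset.mem_univ a)⟩,
    fun k => (e.symm k : β), fun k => ?_, Subtype.val_injective.comp e.symm.injective,
    fun a => by simp⟩
  obtain ⟨a, -, ha⟩ := Finset.mem_image.1 (e.symm k).2
  exact ⟨a, e.symm.injective (by rw [e.symm_apply_apply]; exact Subtype.ext ha)⟩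

section ConvexHull

variable {E ι : Type*} [AddCommGroup E] [Module ℝ E] [Fintype ι] {Sk : ι → Set E}

theorem convexHull_iUnion_eq_image (hcvx : ∀ k, Convex ℝ (Sk k)) (hne : ∀ k, (Sk k).Nonempty) :
    convexHull ℝ (⋃ k, Sk k) =
      (fun p : (ι → ℝ) × (ι → E) => ∑ k, p.1 k • p.2 k) '' (stdSimplex ℝ ι ×ˢ Set.univ.pi Sk) := by
  classical
  refine (convexHull_min ?_ ?_).antisymm ?_
  · refine Set.iUnion_subset fun k s hs => ?_
    choose t ht using hne
    refine ⟨(Pi.single k 1, Function.update t k s),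
      ⟨single_mem_stdSimplex ℝ k, fun j _ => ?_⟩, ?_⟩
    · rcases eq_or_ne j k with rfl | hj
      · simpa using hs
      · simpa [hj] using ht j
    · simp [Pi.single_apply]
  · rintro _ ⟨⟨c, s⟩, ⟨hc, hs⟩, rfl⟩ _ ⟨⟨c', s'⟩, ⟨hc', hs'⟩, rfl⟩ p q hp hq hpq
    choose s'' hs'' hs''eq using fun k => (hcvx k).exists_mem_add_smul_eq (hs k trivial)
      (hs' k trivial) (mul_nonneg hp (hc.1 k)) (mul_nonneg hq (hc'.1 k))
    refine ⟨(p • c + q • c', s''),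
      ⟨convex_stdSimplex ℝ ι hc hc' hp hq hpq, fun k _ => hs'' k⟩, ?_⟩
    simp only [Pi.add_apply, Pi.smul_apply, smul_eq_mul, hs''eq, Finset.smul_sum, smul_smul,
      Finset.sum_add_distrib]
  · rintro _ ⟨⟨c, s⟩, ⟨hc, hs⟩, rfl⟩
    exact (convex_convexHull ℝ _).sum_mem (fun k _ => hc.1 k) hc.2
      fun k _ => subset_convexHull ℝ _ (Set.mem_iUnion_of_mem k (hs k trivial))

theorem isCompact_convexHull_iUnion [TopologicalSpace E] [ContinuousAdd E] [ContinuousSMul ℝ E]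
    (hc : ∀ k, IsCompact (Sk k)) (hcvx : ∀ k, Convex ℝ (Sk k)) (hne : ∀ k, (Sk k).Nonempty) :
    IsCompact (convexHull ℝ (⋃ k, Sk k)) := by
  rw [convexHull_iUnion_eq_image hcvx hne]
  exact ((isCompact_stdSimplex ℝ ι).prod (isCompact_univ_pi hc)).image (by fun_prop)

end ConvexHull

theorem exists_affineIndependent_extremePoints {V : Type*} [NormedAddCommGroup V]
    [NormedSpace ℝ V] [FiniteDimensional ℝ V] {S : Set V} (hS : IsCompact S) (hcvx : Convex ℝ S) :
    ∃ (d : ℕ) (x : Fin d → V), (∀ j, x j ∈ S.extremePoints ℝ) ∧ AffineIndependent ℝ x ∧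
      S ⊆ affineSpan ℝ (Set.range x) := by
  obtain ⟨t, htE, hspan, hind⟩ := exists_affineIndependent ℝ V (S.extremePoints ℝ)
  have := finite_of_fin_dim_affineIndependent ℝ hind
  let e := (Finite.equivFin t).symm
  refine ⟨_, (↑) ∘ e, fun j => htE (e j).2, hind.comp_embedding e.toEmbedding, ?_⟩
  rw [Set.range_comp, e.range_eq_univ, Set.image_univ, Subtype.range_coe, hspan]
  calc S = closure (convexHull ℝ (S.extremePoints ℝ)) :=
        (closure_convexHull_extremePoints hS hcvx).symm
    _ ⊆ affineSpan ℝ (S.extremePoints ℝ) :=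
        closure_minimal (convexHull_subset_affineSpan _)
          (affineSpan ℝ _).closed_of_finiteDimensional

namespace StateSpace

section AddCommGroup

variable {V : Type*} [AddCommGroup V] [Module ℝ V]

def cone (A : Set V) : Set V := {v | ∃ c : ℝ, 0 ≤ c ∧ ∃ s ∈ A, v = c • s}

section Cone

variable {A : Set V}

theorem subset_cone : A ⊆ cone A := fun s hs => ⟨1, zero_le_one, s, hs, (one_smul ℝ s).symm⟩

theorem zero_mem_cone (hA : A.Nonempty) : (0 : V) ∈ cone A :=
  let ⟨s, hs⟩ := hA
  ⟨0, le_rfl, s, hs, (zero_smul ℝ s).symm⟩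

theorem smul_mem_cone {c : ℝ} (hc : 0 ≤ c) {v : V} (hv : v ∈ cone A) : c • v ∈ cone A := by
  obtain ⟨a, ha, s, hs, rfl⟩ := hv
  exact ⟨c * a, mul_nonneg hc ha, s, hs, smul_smul c a s⟩

theorem add_mem_cone (hA : Convex ℝ A) {v w : V} (hv : v ∈ cone A) (hw : w ∈ cone A) :
    v + w ∈ cone A := by
  obtain ⟨a, ha, s, hs, rfl⟩ := hv
  obtain ⟨b, hb, t, ht, rfl⟩ := hw
  obtain ⟨z, hz, hzst⟩ := hA.exists_mem_add_smul_eq hs ht ha hb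
  exact ⟨a + b, add_nonneg ha hb, z, hz, hzst.symm⟩

theorem cone_subset_span : cone A ⊆ Submodule.span ℝ A := by
  rintro _ ⟨c, -, s, hs, rfl⟩
  exact Submodule.smul_mem _ c (Submodule.subset_span hs)

theorem exists_sub_of_mem_span (hA : Convex ℝ A) (hne : A.Nonempty) {v : V}
    (hv : v ∈ Submodule.span ℝ A) : ∃ a ∈ cone A, ∃ b ∈ cone A, v = a - b := by
  induction hv using Submodule.span_induction with
  | mem x hx => exact ⟨x, subset_cone hx, 0, zero_mem_cone hne, (sub_zero x).symm⟩
  | zero => exact ⟨0, zero_mem_cone hne, 0, zero_mem_cone hne, (sub_zero 0).symm⟩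
  | add x y _ _ hx hy =>
    obtain ⟨a, ha, b, hb, rfl⟩ := hx
    obtain ⟨a', ha', b', hb', rfl⟩ := hy
    exact ⟨a + a', add_mem_cone hA ha ha', b + b', add_mem_cone hA hb hb', by abel⟩
  | smul c x _ hx =>
    obtain ⟨a, ha, b, hb, rfl⟩ := hx
    rcases le_total 0 c with hc | hc
    · exact ⟨c • a, smul_mem_cone hc ha, c • b, smul_mem_cone hc hb, smul_sub c a b⟩
    · refine ⟨(-c) • b, smul_mem_cone (neg_nonneg.2 hc) hb,
        (-c) • a, smul_mem_cone (neg_nonneg.2 hc) ha, ?_⟩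
      rw [neg_smul, neg_smul, smul_sub]
      abel

variable {u : V →ₗ[ℝ] ℝ}

theorem map_nonneg_of_mem_cone (hu : ∀ s ∈ A, u s = 1) {v : V} (hv : v ∈ cone A) : 0 ≤ u v := by
  obtain ⟨c, hc, s, hs, rfl⟩ := hv
  simpa [hu s hs] using hc

theorem eq_map_smul_of_mem_cone (hu : ∀ s ∈ A, u s = 1) {v : V} (hv : v ∈ cone A) :
    ∃ s ∈ A, v = u v • s := by
  obtain ⟨c, -, s, hs, rfl⟩ := hv
  exact ⟨s, hs, by simp [hu s hs]⟩

end Cone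

variable {ι : Type*} [Fintype ι]

/-- `IsDirectSumDecomp S Sk` says that every point of `S` has a unique block decomposition. -/
def IsBlockDecomp (Sk : ι → Set V) (z : V) (v : ι → V) : Prop :=
  (∀ k, v k ∈ cone (Sk k)) ∧ z = ∑ k, v k

variable {S : Set V} {Sk : ι → Set V} {u : V →ₗ[ℝ] ℝ}

theorem mem_convexHull_iUnion_of_isBlockDecomp (hu : ∀ k, ∀ s ∈ Sk k, u s = 1) {z : V}
    {v : ι → V} (h : IsBlockDecomp Sk z v) (hz : u z = 1) : z ∈ convexHull ℝ (⋃ k, Sk k) := by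
  choose s hs hvs using fun k => eq_map_smul_of_mem_cone (hu k) (h.1 k)
  have hsum : ∑ k, u (v k) = 1 := by rw [← map_sum, ← h.2, hz]
  rw [h.2, Finset.sum_congr rfl fun k _ => hvs k]
  exact (convex_convexHull ℝ _).sum_mem (fun k _ => map_nonneg_of_mem_cone (hu k) (h.1 k)) hsum
    fun k _ => subset_convexHull ℝ _ (Set.mem_iUnion_of_mem k (hs k))

theorem eq_zero_of_map_sum_eq_zero (hu : ∀ k, ∀ s ∈ Sk k, u s = 1) {a : ι → V}
    (ha : ∀ k, a k ∈ cone (Sk k)) (h : u (∑ k, a k) = 0) : a = 0 := by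
  funext k
  have hk := (Finset.sum_eq_zero_iff_of_nonneg fun k _ => map_nonneg_of_mem_cone (hu k) (ha k)).1
    (by rwa [← map_sum]) k (Finset.mem_univ k)
  obtain ⟨s, -, hs⟩ := eq_map_smul_of_mem_cone (hu k) (ha k)
  rw [Pi.zero_apply, hs, hk, zero_smul]

theorem eq_convexHull_iUnion (hu : ∀ s ∈ S, u s = 1) (hsub : ∀ k, Sk k ⊆ S) (hS : Convex ℝ S)
    (hdec : ∀ z ∈ S, ∃ v, IsBlockDecomp Sk z v) : S = convexHull ℝ (⋃ k, Sk k) :=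
  Set.Subset.antisymm
    (fun z hz => (hdec z hz).elim fun _ h =>
      mem_convexHull_iUnion_of_isBlockDecomp (fun k s hs => hu s (hsub k hs)) h (hu z hz))
    (convexHull_min (Set.iUnion_subset hsub) hS)

theorem extremePoints_subset_iUnion (hu : ∀ s ∈ S, u s = 1) (hsub : ∀ k, Sk k ⊆ S)
    (hS : Convex ℝ S) (hdec : ∀ z ∈ S, ∃ v, IsBlockDecomp Sk z v) :
    S.extremePoints ℝ ⊆ ⋃ k, Sk k := by
  rw [eq_convexHull_iUnion hu hsub hS hdec]
  exact extremePoints_convexHull_subset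

/-- Uniqueness of decompositions of states propagates, by rescaling, to the cones over them. -/
theorem eq_of_sum_eq_of_mem_cone (hu : ∀ s ∈ S, u s = 1) (hsub : ∀ k, Sk k ⊆ S)
    (hS : Convex ℝ S) (hdec : ∀ z ∈ S, ∃! v, IsBlockDecomp Sk z v) {a b : ι → V}
    (ha : ∀ k, a k ∈ cone (Sk k)) (hb : ∀ k, b k ∈ cone (Sk k)) (hab : ∑ k, a k = ∑ k, b k) :
    a = b := by
  have huk : ∀ k, ∀ s ∈ Sk k, u s = 1 := fun k s hs => hu s (hsub k hs)
  by_cases ht : u (∑ k, a k) = 0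
  · rw [eq_zero_of_map_sum_eq_zero huk ha ht, eq_zero_of_map_sum_eq_zero huk hb (hab ▸ ht)]
  have ht0 : 0 ≤ u (∑ k, a k) := by
    rw [map_sum]; exact Finset.sum_nonneg fun k _ => map_nonneg_of_mem_cone (huk k) (ha k)
  set t := u (∑ k, a k)
  have hdecomp : ∀ w : ι → V, (∀ k, w k ∈ cone (Sk k)) → ∑ k, w k = ∑ k, a k →
      IsBlockDecomp Sk (t⁻¹ • ∑ k, a k) (t⁻¹ • w) := fun w hw hsum =>
    ⟨fun k => smul_mem_cone (inv_nonneg.2 ht0) (hw k), by simp [Finset.smul_sum, ← hsum]⟩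
  have hz : u (t⁻¹ • ∑ k, a k) = 1 := by rw [map_smul, smul_eq_mul, inv_mul_cancel₀ ht]
  have hzS : t⁻¹ • ∑ k, a k ∈ S :=
    eq_convexHull_iUnion hu hsub hS (fun z hz => (hdec z hz).exists) ▸
    mem_convexHull_iUnion_of_isBlockDecomp huk (hdecomp a ha rfl) hz
  exact smul_right_injective _ (inv_ne_zero ht)
    ((hdec _ hzS).unique (hdecomp a ha rfl) (hdecomp b hb hab.symm))

theorem iSupIndep_span (hu : ∀ s ∈ S, u s = 1) (hsub : ∀ k, Sk k ⊆ S) (hS : Convex ℝ S)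
    (hdec : ∀ z ∈ S, ∃! v, IsBlockDecomp Sk z v) (hcvx : ∀ k, Convex ℝ (Sk k))
    (hne : ∀ k, (Sk k).Nonempty) : iSupIndep fun k => Submodule.span ℝ (Sk k) := by
  refine iSupIndep_iff_forall_sum_eq_zero.2 fun y hy hy0 => ?_
  choose a ha b hb hab using fun k => exists_sub_of_mem_span (hcvx k) (hne k) (hy k)
  have hab' : a = b := eq_of_sum_eq_of_mem_cone hu hsub hS hdec ha hb <| by
    rwa [funext hab, Finset.sum_sub_distrib, sub_eq_zero] at hy0
  funext k
  rw [hab k, hab', sub_self, Pi.zero_apply]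

end AddCommGroup

section Normed

variable {V : Type*} [NormedAddCommGroup V] [NormedSpace ℝ V] {S : Set V} {u f : V →ₗ[ℝ] ℝ}

theorem isDirectSumDecomp_of_extremePoints_subset {N : ℕ} {Sk : Fin N → Set V}
    (hScpt : IsCompact S) (hScvx : Convex ℝ S)
    (hSk : ∀ k, (Sk k).Nonempty ∧ Convex ℝ (Sk k) ∧ IsClosed (Sk k) ∧ Sk k ⊆ S)
    (hext : S.extremePoints ℝ ⊆ ⋃ k, Sk k) (hind : iSupIndep fun k => Submodule.span ℝ (Sk k)) :
    IsDirectSumDecomp S Sk := by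
  have hcvx k := (hSk k).2.1
  have hne k := (hSk k).1
  have hcpt k := hScpt.of_isClosed_subset (hSk k).2.2.1 (hSk k).2.2.2
  have hS : S ⊆ convexHull ℝ (⋃ k, Sk k) :=
    calc S = closure (convexHull ℝ (S.extremePoints ℝ)) :=
          (closure_convexHull_extremePoints hScpt hScvx).symm
      _ ⊆ convexHull ℝ (⋃ k, Sk k) :=
          closure_minimal (convexHull_mono hext)
            (isCompact_convexHull_iUnion hcpt hcvx hne).isClosed
  refine ⟨hSk, fun z hz => ?_⟩
  obtain ⟨⟨c, s⟩, ⟨hc, hs⟩, rfl⟩ := convexHull_iUnion_eq_image hcvx hne ▸ hS hz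
  have hcs k : c k • s k ∈ cone (Sk k) := ⟨c k, hc.1 k, s k, hs k trivial, rfl⟩
  refine ⟨fun k => c k • s k, ⟨hcs, rfl⟩, fun v hv => sub_eq_zero.1 ?_⟩
  refine iSupIndep_iff_forall_sum_eq_zero.1 hind _
    (fun k => sub_mem (cone_subset_span (hv.1 k)) (cone_subset_span (hcs k))) ?_
  simp only [Pi.sub_apply, Finset.sum_sub_distrib, ← hv.2, sub_self]

theorem exists_isDirectSumDecomp_of_inT2 [FiniteDimensional ℝ V] (hScpt : IsCompact S)
    (hScvx : Convex ℝ S) (hu : ∀ s ∈ S, u s = 1) (h : InT2 S f) :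
    ∃ (N : ℕ) (Sk : Fin N → Set V),
      IsDirectSumDecomp S Sk ∧ ∀ k, ∀ a ∈ Sk k, ∀ b ∈ Sk k, f a = f b := by
  obtain ⟨d, x, hxe, haff, hspan, hcond⟩ := h
  have hx1 j : u (x j) = 1 := hu _ (hxe j).1
  obtain ⟨N, κ, val, hκ, hval, hfx⟩ := exists_fin_surjective_comp_injective (f ∘ x)
  simp only [Function.comp_apply] at hfx
  set W : Fin N → Submodule ℝ V := fun k => Submodule.span ℝ (x '' (κ ⁻¹' {k}))
  have hxW j : x j ∈ W (κ j) := Submodule.subset_span ⟨j, rfl, rfl⟩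
  have hfW k : ∀ a ∈ W k, f a = val k * u a := by
    have : W k ≤ LinearMap.ker (f - val k • u) := Submodule.span_le.2 <| by
      rintro _ ⟨j, rfl, rfl⟩
      simp [hfx j, hx1 j]
    intro a ha
    simpa [sub_eq_zero] using this ha
  have hext : S.extremePoints ℝ ⊆ ⋃ k, S ∩ W k := by
    intro y hy
    obtain ⟨α, hα1, hαy⟩ := exists_sum_smul_eq_of_mem_affineSpan (hspan hy.1)
    have hfy j (hj : α j ≠ 0) : f (x j) = f y := by
      simpa [sub_eq_zero, hj] using hcond y hy α ⟨hα1, hαy⟩ j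
    obtain ⟨j₀, hj₀⟩ : ∃ j, α j ≠ 0 := by
      by_contra! h0
      simp [h0] at hα1
    refine Set.mem_iUnion.2 ⟨κ j₀, hy.1, hαy ▸ Submodule.sum_mem _ fun j _ => ?_⟩
    rcases eq_or_ne (α j) 0 with hj | hj
    · simp [hj]
    · have : κ j = κ j₀ := hval (by rw [← hfx, ← hfx, hfy j hj, hfy j₀ hj₀])
      exact Submodule.smul_mem _ _ (this ▸ hxW j)
  refine ⟨N, fun k => S ∩ W k, isDirectSumDecomp_of_extremePoints_subset hScpt hScvx
    (fun k => ⟨?_, hScvx.inter (W k).convex,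
      hScpt.isClosed.inter (W k).closed_of_finiteDimensional, Set.inter_subset_left⟩) hext
    (((haff.linearIndependent_of_map_eq_one u hx1).iSupIndep_span_fiber κ).mono
      fun k => Submodule.span_le.2 Set.inter_subset_right), ?_⟩
  · obtain ⟨j, rfl⟩ := hκ k
    exact ⟨x j, (hxe j).1, hxW j⟩
  · rintro k a ⟨haS, haW⟩ b ⟨hbS, hbW⟩
    rw [hfW k a haW, hfW k b hbW, hu a haS, hu b hbS]

theorem inT2_of_isDirectSumDecomp [FiniteDimensional ℝ V] (hScpt : IsCompact S)
    (hScvx : Convex ℝ S) (hu : ∀ s ∈ S, u s = 1) {N : ℕ} {Sk : Fin N → Set V}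
    (h : IsDirectSumDecomp S Sk) (hf : ∀ k, ∀ a ∈ Sk k, ∀ b ∈ Sk k, f a = f b) : InT2 S f := by
  obtain ⟨hSk, hdec⟩ := h
  have hsub k := (hSk k).2.2.2
  have hext := extremePoints_subset_iUnion hu hsub hScvx fun z hz => (hdec z hz).exists
  have hind := iSupIndep_span hu hsub hScvx hdec (fun k => (hSk k).2.1) (fun k => (hSk k).1)
  obtain ⟨d, x, hxe, haff, hspan⟩ := exists_affineIndependent_extremePoints hScpt hScvx
  have hlin := haff.linearIndependent_of_map_eq_one u fun j => hu _ (hxe j).1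
  choose κ hκ using fun j => Set.mem_iUnion.1 (hext (hxe j))
  refine ⟨d, x, hxe, haff, hspan, fun y hy α ⟨_, hαy⟩ j => ?_⟩
  obtain ⟨k, hyk⟩ := Set.mem_iUnion.1 (hext hy)
  by_cases hj : κ j = k
  · rw [hf k _ (hj ▸ hκ j) y hyk, sub_self, mul_zero]
  · rw [hind.coeff_eq_zero_of_sum_mem hlin (α := α) (fun j => Submodule.subset_span (hκ j))
      (hαy ▸ Submodule.subset_span hyk) hj, zero_mul]

end Normed

end StateSpace

open StateSpace in
theorem T2_iff_directSum_general
    {V : Type*} [NormedAddCommGroup V] [NormedSpace ℝ V] [FiniteDimensional ℝ V]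
    (S : Set V) (hScvx : Convex ℝ S) (hScpt : IsCompact S)
    (u : V →ₗ[ℝ] ℝ) (hu : ∀ s ∈ S, u s = 1)
    (f : V →ₗ[ℝ] ℝ) :
    InT2 S f ↔
      ∃ (N : ℕ) (Sk : Fin N → Set V),
        IsDirectSumDecomp S Sk ∧
        ∀ k, ∀ a ∈ Sk k, ∀ b ∈ Sk k, f a = f b :=
  ⟨exists_isDirectSumDecomp_of_inT2 hScpt hScvx hu,
    fun ⟨_, _, h, hf⟩ => inT2_of_isDirectSumDecomp hScpt hScvx hu h hf⟩

/-- Theorem 1: an effect `f` satisfies the non-disturbance condition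
(`f ∈ T̃₂`) iff the state space decomposes as a direct sum `S = ⊕ₖ Sk` with `f`
constant on each summand `Sk`. -/
theorem T2_iff_directSum
    {V : Type*} [NormedAddCommGroup V] [NormedSpace ℝ V] [FiniteDimensional ℝ V]
    (S : Set V) (hSne : S.Nonempty) (hScvx : Convex ℝ S) (hScpt : IsCompact S)
    (u : V →ₗ[ℝ] ℝ) (hu : ∀ s ∈ S, u s = 1)
    (f : V →ₗ[ℝ] ℝ) (hf : IsEffect S f) :
    InT2 S f ↔
      ∃ (N : ℕ) (Sk : Fin N → Set V),
        IsDirectSumDecomp S Sk ∧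
        ∀ k, ∀ a ∈ Sk k, ∀ b ∈ Sk k, f a = f b :=
  T2_iff_directSum_general S hScvx hScpt u hu f
end

section
/- A two-dimensional state space S (so dim V = 3) decomposes as a nontrivial direct sum S = S_1 ⊕ S_2 if and only if S is a triangle (the simplex with three extreme points). -/
/-- `S` decomposes as the direct sum `S₁ ⊕ S₂`: both summands are nonempty closed
convex subsets of `S` and every state has a unique weighted decomposition into
components from the cones generated by the summands. -/
def IsDirectSumDecomp₂ {V : Type*} [NormedAddCommGroup V] [NormedSpace ℝ V]
    (S S₁ S₂ : Set V) : Prop :=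
  S₁.Nonempty ∧ S₂.Nonempty ∧ Convex ℝ S₁ ∧ Convex ℝ S₂ ∧
  IsClosed S₁ ∧ IsClosed S₂ ∧ S₁ ⊆ S ∧ S₂ ⊆ S ∧
  ∀ x ∈ S, ∃! v : V × V,
    (∃ c : ℝ, 0 ≤ c ∧ ∃ s ∈ S₁, v.1 = c • s) ∧
    (∃ c : ℝ, 0 ≤ c ∧ ∃ s ∈ S₂, v.2 = c • s) ∧
    x = v.1 + v.2

/-!
Uniqueness of decompositions makes the spans of `S₁` and `S₂` independent, and existence makes
them span `V`, so their dimensions are `1` and `2`. Since `S` lies in the hyperplane `u = 1`,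
which misses the origin, a summand with one-dimensional span is a point and one with
two-dimensional span is a compact convex subset of a line, i.e. a segment. Every state is a convex
combination of a point of each summand, so `S` is the join of a point and a segment, a triangle;
its three vertices span `V`, hence are linearly independent. Conversely, a vertex and the opposite
edge of a triangle span independent subspaces, which makes the decomposition unique.
-/

open Set Module

theorem range_fin_three {α : Type*} (x : Fin 3 → α) : range x = {x 0, x 1, x 2} := by
  ext y
  simp [Fin.exists_fin_succ, eq_comm]

theorem span_convexHull {V : Type*} [AddCommGroup V] [Module ℝ V] (s : Set V) :
    Submodule.span ℝ (convexHull ℝ s) = Submodule.span ℝ s :=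
  le_antisymm (Submodule.span_le.2 (convexHull_min Submodule.subset_span (Submodule.convex _)))
    (Submodule.span_mono (subset_convexHull ℝ s))

theorem linearIndependent_of_span_convexHull_eq_top {V ι : Type*} [AddCommGroup V] [Module ℝ V]
    [Fintype ι] {x : ι → V} (hdim : finrank ℝ V = Fintype.card ι)
    (hspan : Submodule.span ℝ (convexHull ℝ (range x)) = ⊤) : LinearIndependent ℝ x :=
  linearIndependent_of_top_le_span_of_card_eq_finrank
    ((span_convexHull _).symm.trans hspan).ge hdim.symm

section Cone

variable {V : Type*} [AddCommGroup V] [Module ℝ V] {S T : Set V}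

/-- Membership in `cone S₁` is literally the first clause of `IsDirectSumDecomp₂`. -/
def cone (S : Set V) : Set V := {v | ∃ c : ℝ, 0 ≤ c ∧ ∃ s ∈ S, v = c • s}

theorem subset_cone : S ⊆ cone S := fun s hs => ⟨1, zero_le_one, s, hs, (one_smul ℝ s).symm⟩

theorem cone_mono (h : S ⊆ T) : cone S ⊆ cone T := by
  rintro _ ⟨c, hc, s, hs, rfl⟩
  exact ⟨c, hc, s, h hs, rfl⟩

theorem zero_mem_cone (hne : S.Nonempty) : (0 : V) ∈ cone S :=
  let ⟨s, hs⟩ := hne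
  ⟨0, le_rfl, s, hs, (zero_smul ℝ s).symm⟩

theorem smul_mem_cone {r : ℝ} (hr : 0 ≤ r) {v : V} (hv : v ∈ cone S) : r • v ∈ cone S := by
  obtain ⟨c, hc, s, hs, rfl⟩ := hv
  exact ⟨r * c, mul_nonneg hr hc, s, hs, smul_smul r c s⟩

theorem Convex.add_mem_cone (hS : Convex ℝ S) {v w : V} (hv : v ∈ cone S) (hw : w ∈ cone S) :
    v + w ∈ cone S := by
  obtain ⟨c, hc, s, hs, rfl⟩ := hv
  obtain ⟨d, hd, t, ht, rfl⟩ := hw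
  rcases (add_nonneg hc hd).eq_or_lt with hcd | hcd
  · obtain ⟨rfl, rfl⟩ : c = 0 ∧ d = 0 := ⟨by linarith, by linarith⟩
    exact ⟨0, le_rfl, s, hs, by simp⟩
  · refine ⟨c + d, hcd.le, (c / (c + d)) • s + (d / (c + d)) • t,
      hS hs ht (div_nonneg hc hcd.le) (div_nonneg hd hcd.le) (by field_simp), ?_⟩
    rw [smul_add, smul_smul, smul_smul, mul_div_cancel₀ _ hcd.ne', mul_div_cancel₀ _ hcd.ne']

theorem cone_subset_span : cone S ⊆ Submodule.span ℝ S := by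
  rintro _ ⟨c, -, s, hs, rfl⟩
  exact Submodule.smul_mem _ c (Submodule.subset_span hs)

open scoped Pointwise in
theorem Convex.span_subset_cone_sub_cone (hS : Convex ℝ S) (hne : S.Nonempty) :
    (Submodule.span ℝ S : Set V) ⊆ cone S - cone S := by
  intro z hz
  induction hz using Submodule.span_induction with
  | mem x hx => exact ⟨x, subset_cone hx, 0, zero_mem_cone hne, sub_zero x⟩
  | zero => exact ⟨0, zero_mem_cone hne, 0, zero_mem_cone hne, sub_zero 0⟩
  | add x y _ _ hx hy =>
    obtain ⟨a, ha, b, hb, rfl⟩ := hx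
    obtain ⟨a', ha', b', hb', rfl⟩ := hy
    exact ⟨a + a', hS.add_mem_cone ha ha', b + b', hS.add_mem_cone hb hb',
      (sub_add_sub_comm a b a' b').symm⟩
  | smul r x _ hx =>
    obtain ⟨a, ha, b, hb, rfl⟩ := hx
    rcases le_or_gt 0 r with hr | hr
    · exact ⟨r • a, smul_mem_cone hr ha, r • b, smul_mem_cone hr hb, (smul_sub r a b).symm⟩
    · refine ⟨(-r) • b, smul_mem_cone (by linarith) hb, (-r) • a, smul_mem_cone (by linarith) ha,
        by simp only [neg_smul, smul_sub]; abel⟩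

variable {u : V →ₗ[ℝ] ℝ}

theorem map_nonneg_of_mem_cone (hu : ∀ s ∈ S, u s = 1) {v : V} (hv : v ∈ cone S) : 0 ≤ u v := by
  obtain ⟨c, hc, s, hs, rfl⟩ := hv
  simpa [hu s hs] using hc

theorem mem_of_mem_cone_of_map_eq_one (hu : ∀ s ∈ S, u s = 1) {v : V} (hv : v ∈ cone S)
    (h : u v = 1) : v ∈ S := by
  obtain ⟨c, -, s, hs, rfl⟩ := hv
  obtain rfl : c = 1 := by simpa [hu s hs] using h
  rwa [one_smul]

end Cone

section Hyperplane

variable {K V : Type*} [Field K] [AddCommGroup V] [Module K V] [FiniteDimensional K V]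
  {T : Set V} (u : V →ₗ[K] K)

theorem finrank_vectorSpan_lt_finrank_span (hu : ∀ s ∈ T, u s = 1) (hne : T.Nonempty) :
    finrank K (vectorSpan K T) < finrank K (Submodule.span K T) := by
  obtain ⟨p, hp⟩ := hne
  have hle : vectorSpan K T ≤ Submodule.span K T ⊓ LinearMap.ker u := by
    rw [vectorSpan_def, Submodule.span_le]
    rintro _ ⟨s, hs, t, ht, rfl⟩
    exact ⟨Submodule.sub_mem _ (Submodule.subset_span hs) (Submodule.subset_span ht),
      by simp [hu s hs, hu t ht]⟩
  have hlt : Submodule.span K T ⊓ LinearMap.ker u < Submodule.span K T :=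
    inf_lt_left.2 fun h => by simpa [hu p hp] using h (Submodule.subset_span hp)
  exact (Submodule.finrank_mono hle).trans_lt (Submodule.finrank_lt_finrank_of_lt hlt)

theorem eq_singleton_of_finrank_span_le_one (hu : ∀ s ∈ T, u s = 1) {p : V} (hp : p ∈ T)
    (h : finrank K (Submodule.span K T) ≤ 1) : T = {p} := by
  have hlt := finrank_vectorSpan_lt_finrank_span u hu ⟨p, hp⟩
  have hbot : vectorSpan K T = ⊥ := Submodule.finrank_eq_zero.1 (by omega)
  exact ((vectorSpan_eq_bot_iff_subsingleton K).1 hbot).eq_singleton_of_mem hp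

theorem collinear_of_finrank_span_le_two (hu : ∀ s ∈ T, u s = 1) (hne : T.Nonempty)
    (h : finrank K (Submodule.span K T) ≤ 2) : Collinear K T := by
  have hlt := finrank_vectorSpan_lt_finrank_span u hu hne
  rw [collinear_iff_finrank_le_one]
  omega

end Hyperplane

section Segment

variable {V : Type*} [NormedAddCommGroup V] [NormedSpace ℝ V]

theorem Collinear.exists_eq_segment {T : Set V} (hcol : Collinear ℝ T) (hc : IsCompact T)
    (hcvx : Convex ℝ T) (hne : T.Nonempty) : ∃ a b : V, T = segment ℝ a b := by
  obtain ⟨p, hp⟩ := hne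
  obtain ⟨v, hv⟩ := (collinear_iff_of_mem hp).1 hcol
  rcases eq_or_ne v 0 with rfl | hv0
  · refine ⟨p, p, ?_⟩
    rw [segment_same]
    exact eq_singleton_iff_unique_mem.2 ⟨hp, fun q hq => by simpa using hv q hq⟩
  let g : ℝ →ᵃ[ℝ] V := AffineMap.lineMap p (v + p)
  have hg : ⇑g = (· + p) ∘ (· • v) := by
    ext r
    simp [g, AffineMap.lineMap_apply]
  have hgT : g '' (g ⁻¹' T) = T := image_preimage_eq_of_subset fun q hq => by
    obtain ⟨r, hr⟩ := hv q hq
    exact ⟨r, by rw [hg, hr]; rfl⟩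
  set R := g ⁻¹' T
  have hRc : IsCompact R := by
    simp only [R, hg]
    exact ((Homeomorph.addRight p).isClosedEmbedding.comp
      (isClosedEmbedding_smul_left (𝕜 := ℝ) hv0)).isCompact_preimage hc
  have hRne : R.Nonempty := by
    rw [← image_nonempty, hgT]
    exact ⟨p, hp⟩
  have hR : R = Icc (sInf R) (sSup R) :=
    eq_Icc_of_connected_compact ((hcvx.affine_preimage g).isConnected hRne) hRc
  refine ⟨g (sInf R), g (sSup R), ?_⟩
  rw [← image_segment, segment_eq_Icc (csInf_le_csSup hRne hRc.bddBelow hRc.bddAbove), ← hR, hgT]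

end Segment

section DirectSum

variable {V : Type*} [NormedAddCommGroup V] [NormedSpace ℝ V] {S S₁ S₂ : Set V}

theorem IsDirectSumDecomp₂.symm (h : IsDirectSumDecomp₂ S S₁ S₂) : IsDirectSumDecomp₂ S S₂ S₁ := by
  obtain ⟨hne₁, hne₂, hc₁, hc₂, hcl₁, hcl₂, hsub₁, hsub₂, hdec⟩ := h
  refine ⟨hne₂, hne₁, hc₂, hc₁, hcl₂, hcl₁, hsub₂, hsub₁, fun x hx => ?_⟩
  obtain ⟨v, ⟨hv₁, hv₂, hv⟩, huniq⟩ := hdec x hx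
  refine ⟨v.swap, ⟨hv₂, hv₁, hv.trans (add_comm _ _)⟩, fun w ⟨hw₁, hw₂, hw⟩ => ?_⟩
  rw [← huniq w.swap ⟨hw₂, hw₁, hw.trans (add_comm _ _)⟩, Prod.swap_swap]

theorem IsDirectSumDecomp₂.span_sup_span (h : IsDirectSumDecomp₂ S S₁ S₂) :
    Submodule.span ℝ S₁ ⊔ Submodule.span ℝ S₂ = Submodule.span ℝ S := by
  obtain ⟨-, -, -, -, -, -, hsub₁, hsub₂, hdec⟩ := h
  refine le_antisymm (sup_le (Submodule.span_mono hsub₁) (Submodule.span_mono hsub₂)) ?_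
  refine Submodule.span_le.2 fun x hx => ?_
  obtain ⟨v, ⟨hv₁, hv₂, rfl⟩, -⟩ := hdec x hx
  exact Submodule.add_mem_sup (cone_subset_span hv₁) (cone_subset_span hv₂)

variable {u : V →ₗ[ℝ] ℝ}

theorem IsDirectSumDecomp₂.eq_convexJoin (h : IsDirectSumDecomp₂ S S₁ S₂) (hS : Convex ℝ S)
    (hu : ∀ s ∈ S, u s = 1) : S = convexJoin ℝ S₁ S₂ := by
  obtain ⟨-, -, -, -, -, -, hsub₁, hsub₂, hdec⟩ := h
  refine le_antisymm (fun x hx => ?_) (convexJoin_subset hsub₁ hsub₂ hS)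
  obtain ⟨v, ⟨⟨c, hc, s, hs, hv₁⟩, ⟨d, hd, t, ht, hv₂⟩, rfl⟩, -⟩ := hdec x hx
  have hcd : c + d = 1 := by simpa [hv₁, hv₂, hu s (hsub₁ hs), hu t (hsub₂ ht)] using hu _ hx
  exact mem_convexJoin.2 ⟨s, hs, t, ht, c, d, hc, hd, hcd, by rw [hv₁, hv₂]⟩

/-- Adding a point of `S₁` makes the `u`-value positive; rescaling then gives two decompositions
of a single state. -/
theorem IsDirectSumDecomp₂.eq_of_add_eq_add (h : IsDirectSumDecomp₂ S S₁ S₂) (hS : Convex ℝ S)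
    (hu : ∀ s ∈ S, u s = 1) {a₁ b₁ a₂ b₂ : V} (ha₁ : a₁ ∈ cone S₁) (hb₁ : b₁ ∈ cone S₁)
    (ha₂ : a₂ ∈ cone S₂) (hb₂ : b₂ ∈ cone S₂) (hab : a₁ + a₂ = b₁ + b₂) : a₁ = b₁ := by
  obtain ⟨⟨s, hs⟩, -, hc₁, -, -, -, hsub₁, hsub₂, hdec⟩ := h
  have hu₁ : ∀ t ∈ S₁, u t = 1 := fun t ht => hu t (hsub₁ ht)
  have hu₂ : ∀ t ∈ S₂, u t = 1 := fun t ht => hu t (hsub₂ ht)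
  set r := u (a₁ + s + a₂)
  have hr : 0 < r := by
    have := map_nonneg_of_mem_cone hu₁ ha₁
    have := map_nonneg_of_mem_cone hu₂ ha₂
    simp only [r, map_add, hu₁ s hs]
    linarith
  have hmem : r⁻¹ • (a₁ + s + a₂) ∈ S := by
    refine mem_of_mem_cone_of_map_eq_one hu (smul_mem_cone (inv_nonneg.2 hr.le) ?_) ?_
    · exact hS.add_mem_cone (cone_mono hsub₁ (hc₁.add_mem_cone ha₁ (subset_cone hs)))
        (cone_mono hsub₂ ha₂)
    · rw [map_smul, smul_eq_mul, inv_mul_cancel₀ hr.ne']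
  have hsplit := (hdec _ hmem).unique (y₁ := (r⁻¹ • (a₁ + s), r⁻¹ • a₂))
    (y₂ := (r⁻¹ • (b₁ + s), r⁻¹ • b₂))
    ⟨smul_mem_cone (inv_nonneg.2 hr.le) (hc₁.add_mem_cone ha₁ (subset_cone hs)),
      smul_mem_cone (inv_nonneg.2 hr.le) ha₂, smul_add _ _ _⟩
    ⟨smul_mem_cone (inv_nonneg.2 hr.le) (hc₁.add_mem_cone hb₁ (subset_cone hs)),
      smul_mem_cone (inv_nonneg.2 hr.le) hb₂,
      by rw [← smul_add, add_right_comm, hab, add_right_comm]⟩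
  exact add_right_cancel (smul_right_injective V (inv_ne_zero hr.ne') (congrArg Prod.fst hsplit))

theorem IsDirectSumDecomp₂.disjoint_span (h : IsDirectSumDecomp₂ S S₁ S₂) (hS : Convex ℝ S)
    (hu : ∀ s ∈ S, u s = 1) : Disjoint (Submodule.span ℝ S₁) (Submodule.span ℝ S₂) := by
  rw [Submodule.disjoint_def]
  intro z hz₁ hz₂
  obtain ⟨hne₁, hne₂, hc₁, hc₂, -⟩ := id h
  obtain ⟨a₁, ha₁, b₁, hb₁, rfl⟩ := hc₁.span_subset_cone_sub_cone hne₁ hz₁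
  obtain ⟨a₂, ha₂, b₂, hb₂, hz⟩ := hc₂.span_subset_cone_sub_cone hne₂ hz₂
  exact sub_eq_zero.2 <| h.eq_of_add_eq_add hS hu ha₁ hb₁ hb₂ ha₂
    ((sub_eq_sub_iff_add_eq_add.1 hz.symm).trans (add_comm _ _))

theorem IsDirectSumDecomp₂.finrank_span_add_finrank_span [FiniteDimensional ℝ V]
    (h : IsDirectSumDecomp₂ S S₁ S₂) (hS : Convex ℝ S) (hu : ∀ s ∈ S, u s = 1) :
    finrank ℝ (Submodule.span ℝ S₁) + finrank ℝ (Submodule.span ℝ S₂) =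
      finrank ℝ (Submodule.span ℝ S) := by
  rw [← Submodule.finrank_sup_add_finrank_inf_eq, h.span_sup_span,
    (h.disjoint_span hS hu).eq_bot, finrank_bot, add_zero]

theorem isDirectSumDecomp₂_of_disjoint_span (hne₁ : S₁.Nonempty) (hne₂ : S₂.Nonempty)
    (hc₁ : Convex ℝ S₁) (hc₂ : Convex ℝ S₂) (hcl₁ : IsClosed S₁) (hcl₂ : IsClosed S₂)
    (hS : S = convexJoin ℝ S₁ S₂)
    (hdisj : Disjoint (Submodule.span ℝ S₁) (Submodule.span ℝ S₂)) :
    IsDirectSumDecomp₂ S S₁ S₂ := by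
  refine ⟨hne₁, hne₂, hc₁, hc₂, hcl₁, hcl₂, hS ▸ subset_convexJoin_left hne₂,
    hS ▸ subset_convexJoin_right hne₁, fun x hx => ?_⟩
  obtain ⟨s, hs, t, ht, c, d, hc, hd, -, rfl⟩ := mem_convexJoin.1 (hS ▸ hx)
  refine ⟨(c • s, d • t), ⟨⟨c, hc, s, hs, rfl⟩, ⟨d, hd, t, ht, rfl⟩, rfl⟩, ?_⟩
  rintro ⟨v₁, v₂⟩ ⟨hv₁, hv₂, hv⟩
  have hv : v₁ + v₂ = c • s + d • t := hv.symm
  have h₁ : v₁ - c • s ∈ Submodule.span ℝ S₁ :=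
    Submodule.sub_mem _ (cone_subset_span hv₁) (Submodule.smul_mem _ c (Submodule.subset_span hs))
  have h₂ : v₁ - c • s ∈ Submodule.span ℝ S₂ := by
    rw [sub_eq_sub_iff_add_eq_add.2 (hv.trans (add_comm _ _))]
    exact Submodule.sub_mem _ (Submodule.smul_mem _ d (Submodule.subset_span ht))
      (cone_subset_span hv₂)
  have hv₁ : v₁ = c • s := sub_eq_zero.1 (Submodule.disjoint_def.1 hdisj _ h₁ h₂)
  exact Prod.ext hv₁ (add_left_cancel (hv₁ ▸ hv))

theorem isDirectSumDecomp₂_vertex_edge {x : Fin 3 → V} (hx : LinearIndependent ℝ x)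
    (hS : S = convexHull ℝ (range x)) :
    IsDirectSumDecomp₂ S {x 0} (segment ℝ (x 1) (x 2)) ∧
      {x 0} ≠ S ∧ segment ℝ (x 1) (x 2) ≠ S := by
  have hmem : ∀ i, x i ∈ S := fun i => hS ▸ subset_convexHull ℝ _ (mem_range_self i)
  have hdisj : Disjoint (Submodule.span ℝ {x 0}) (Submodule.span ℝ (segment ℝ (x 1) (x 2))) := by
    rw [← convexHull_pair, span_convexHull]
    simpa [image_insert_eq] using hx.disjoint_span_image (s := {0}) (t := {1, 2}) (by simp)
  have hclosed : IsClosed (segment ℝ (x 1) (x 2)) := by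
    rw [← convexHull_pair]
    exact ((toFinite _).isCompact_convexHull ℝ).isClosed
  refine ⟨isDirectSumDecomp₂_of_disjoint_span (singleton_nonempty _)
      ⟨x 1, left_mem_segment ℝ _ _⟩ (convex_singleton _) (convex_segment _ _) isClosed_singleton
      hclosed (by rw [hS, range_fin_three, convexJoin_singleton_segment]) hdisj, ?_, ?_⟩
  · intro h
    exact hx.injective.ne (show (1 : Fin 3) ≠ 0 by decide) (h.symm ▸ hmem 1 : x 1 ∈ ({x 0} : Set V))
  · intro h
    refine hx.ne_zero 0 (Submodule.disjoint_def.1 hdisj _ (Submodule.subset_span rfl) ?_)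
    exact Submodule.subset_span (h ▸ hmem 0)

end DirectSum

section Triangle

variable {V : Type*} [NormedAddCommGroup V] [NormedSpace ℝ V] [FiniteDimensional ℝ V]
  {S S₁ S₂ : Set V} {u : V →ₗ[ℝ] ℝ}

theorem IsDirectSumDecomp₂.exists_triangle_of_finrank_le (h : IsDirectSumDecomp₂ S S₁ S₂)
    (hdim : finrank ℝ V = 3) (hS : Convex ℝ S) (hc : IsCompact S)
    (hgen : Submodule.span ℝ S = ⊤) (hu : ∀ s ∈ S, u s = 1)
    (h₁ : finrank ℝ (Submodule.span ℝ S₁) ≤ 1) (h₂ : finrank ℝ (Submodule.span ℝ S₂) ≤ 2) :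
    ∃ x : Fin 3 → V, AffineIndependent ℝ x ∧ S = convexHull ℝ (range x) := by
  obtain ⟨⟨x₀, hx₀⟩, hne₂, -, hc₂, -, hcl₂, hsub₁, hsub₂, -⟩ := id h
  have hS₁ : S₁ = {x₀} :=
    eq_singleton_of_finrank_span_le_one u (fun s hs => hu s (hsub₁ hs)) hx₀ h₁
  obtain ⟨x₁, x₂, hS₂⟩ :=
    (collinear_of_finrank_span_le_two u (fun s hs => hu s (hsub₂ hs)) hne₂ h₂).exists_eq_segment
      (hc.of_isClosed_subset hcl₂ hsub₂) hc₂ hne₂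
  have htri : S = convexHull ℝ (range ![x₀, x₁, x₂]) := by
    rw [h.eq_convexJoin hS hu, hS₁, hS₂, convexJoin_singleton_segment, range_fin_three]
    rfl
  refine ⟨_, (linearIndependent_of_span_convexHull_eq_top ?_ (htri ▸ hgen)).affineIndependent, htri⟩
  rw [hdim, Fintype.card_fin]

theorem IsDirectSumDecomp₂.exists_triangle (h : IsDirectSumDecomp₂ S S₁ S₂)
    (hdim : finrank ℝ V = 3) (hS : Convex ℝ S) (hc : IsCompact S)
    (hgen : Submodule.span ℝ S = ⊤) (hu : ∀ s ∈ S, u s = 1) :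
    ∃ x : Fin 3 → V, AffineIndependent ℝ x ∧ S = convexHull ℝ (range x) := by
  have hsum := h.finrank_span_add_finrank_span hS hu
  rw [hgen, finrank_top, hdim] at hsum
  obtain ⟨hne₁, hne₂, -, -, -, -, hsub₁, hsub₂, -⟩ := id h
  have hpos₁ := finrank_vectorSpan_lt_finrank_span u (fun s hs => hu s (hsub₁ hs)) hne₁
  have hpos₂ := finrank_vectorSpan_lt_finrank_span u (fun s hs => hu s (hsub₂ hs)) hne₂
  rcases le_or_gt (finrank ℝ (Submodule.span ℝ S₁)) 1 with h₁ | h₁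
  · exact h.exists_triangle_of_finrank_le hdim hS hc hgen hu h₁ (by omega)
  · exact h.symm.exists_triangle_of_finrank_le hdim hS hc hgen hu (by omega) (by omega)

end Triangle

theorem twoDim_directSum_iff_triangle_general
    {V : Type*} [NormedAddCommGroup V] [NormedSpace ℝ V] [FiniteDimensional ℝ V]
    (hdim : Module.finrank ℝ V = 3)
    (S : Set V) (hScvx : Convex ℝ S) (hScpt : IsCompact S)
    (hSgen : Submodule.span ℝ S = ⊤)
    (u : V →ₗ[ℝ] ℝ) (hu : ∀ s ∈ S, u s = 1) :
    (∃ S₁ S₂ : Set V, IsDirectSumDecomp₂ S S₁ S₂ ∧ S₁ ≠ S ∧ S₂ ≠ S) ↔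
    (∃ x : Fin 3 → V, AffineIndependent ℝ x ∧ S = convexHull ℝ (Set.range x)) := by
  constructor
  · rintro ⟨S₁, S₂, hD, -, -⟩
    exact hD.exists_triangle hdim hScvx hScpt hSgen hu
  · rintro ⟨x, -, hS⟩
    have hx : LinearIndependent ℝ x :=
      linearIndependent_of_span_convexHull_eq_top (by rw [hdim, Fintype.card_fin]) (hS ▸ hSgen)
    exact ⟨_, _, isDirectSumDecomp₂_vertex_edge hx hS⟩

/-- Corollary 4: a two-dimensional state space `S` (a compact convex
base of a generating cone in a 3-dimensional space `V`) admits a nontrivial direct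
sum decomposition `S = S₁ ⊕ S₂` iff `S` is a triangle, i.e. the convex hull of three
affinely independent extreme points. -/
theorem twoDim_directSum_iff_triangle
    {V : Type*} [NormedAddCommGroup V] [NormedSpace ℝ V] [FiniteDimensional ℝ V]
    (hdim : Module.finrank ℝ V = 3)
    (S : Set V) (hSne : S.Nonempty) (hScvx : Convex ℝ S) (hScpt : IsCompact S)
    (hSgen : Submodule.span ℝ S = ⊤)
    (u : V →ₗ[ℝ] ℝ) (hu : ∀ s ∈ S, u s = 1) :
    (∃ S₁ S₂ : Set V, IsDirectSumDecomp₂ S S₁ S₂ ∧ S₁ ≠ S ∧ S₂ ≠ S) ↔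
    (∃ x : Fin 3 → V, AffineIndependent ℝ x ∧ S = convexHull ℝ (Set.range x)) :=
  twoDim_directSum_iff_triangle_general hdim S hScvx hScpt hSgen u hu
end

section
/- If there exist two post-processing inequivalent dichotomic simulation irreducible observables E and F on S, then T_1 = T_2 = T_3: every observable compatible with all observables is trivial. -/
/-- A bundled observable on the state space `S` with unit effect `u`. -/
structure GObs {V : Type*} [AddCommGroup V] [Module ℝ V]
    (S : Set V) (u : V →ₗ[ℝ] ℝ) where
  n : ℕ
  eff : Fin n → (V →ₗ[ℝ] ℝ)
  effect : ∀ i, IsEffect S (eff i)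
  sum_eq : ∑ i, eff i = u

variable {V : Type*} [AddCommGroup V] [Module ℝ V] {S : Set V} {u : V →ₗ[ℝ] ℝ}

/-- `A` is a post-processing of `B` (`B → A`, i.e. `A ∈ simu(B)`). -/
def GObs.PostProc (B A : GObs S u) : Prop :=
  ∃ ν : Fin B.n → Fin A.n → ℝ,
    (∀ x y, 0 ≤ ν x y) ∧ (∀ x, ∑ y, ν x y = 1) ∧
    ∀ y, A.eff y = ∑ x, ν x y • B.eff x

/-- Post-processing equivalence of observables. -/
def GObs.PPEquiv (B B' : GObs S u) : Prop :=
  B.PostProc B' ∧ B'.PostProc B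

/-- `A` can be simulated from the set of observables `𝓑` by mixing post-processings. -/
def GObs.Simulable (𝓑 : Set (GObs S u)) (A : GObs S u) : Prop :=
  ∃ (m : ℕ) (p : Fin m → ℝ) (B : Fin m → GObs S u)
    (ν : (i : Fin m) → Fin (B i).n → Fin A.n → ℝ),
    (∀ i, 0 ≤ p i) ∧ ∑ i, p i = 1 ∧ (∀ i, B i ∈ 𝓑) ∧
    (∀ i x y, 0 ≤ ν i x y) ∧ (∀ i x, ∑ y, ν i x y = 1) ∧
    ∀ y, A.eff y = ∑ i, p i • ∑ x, ν i x y • (B i).eff x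

/-- `B` is simulation irreducible: whenever `B` can be simulated from a set `𝓑`,
some member of `𝓑` is post-processing equivalent to `B`. -/
def GObs.SimIrr (B : GObs S u) : Prop :=
  ∀ 𝓑 : Set (GObs S u), GObs.Simulable 𝓑 B → ∃ B' ∈ 𝓑, B.PPEquiv B'

/-- Two observables are compatible if both are post-processings of a common
(joint) observable. -/
def GObs.Compatible (A B : GObs S u) : Prop :=
  ∃ G : GObs S u, G.PostProc A ∧ G.PostProc B

/-- Membership in `T₃`: compatibility with every observable. -/
def GObs.InT3 (T : GObs S u) : Prop :=
  ∀ A : GObs S u, T.Compatible A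

/-- A trivial observable (`T₁`): all effects proportional to `u` via a probability
distribution. -/
def GObs.Trivial (T : GObs S u) : Prop :=
  ∃ p : Fin T.n → ℝ, (∀ x, 0 ≤ p x) ∧ ∑ x, p x = 1 ∧ ∀ x, T.eff x = p x • u

/-!
A dichotomic observable is `ofEffect e = (e, u - e)`. If `A ∈ T₃`, a joint observable of `A`
and `E` has `E` as a post-processing, so by simulation irreducibility it is equivalent to `E`
and `A ∈ simu(E)`; likewise `A ∈ simu(F)`. Hence every effect of `A` lies in
`span {u, e} ∩ span {u, f}`, which is `span {u}` unless `f ∈ span {u, e}`.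

That case is excluded as follows. If `e` has minimum `m` and maximum `M > m` on the compact `S`,
then `e' = (e - m u) / (M - m)` is an effect taking the values `0` and `1` on `S`, and every
effect in `span {u, e'}` is a post-processing of `e'`; so `E` and `F` are both equivalent to
`e'`. If `e` is constant `c` on `S`, the decomposition `e = ½ (2e - c u) + ½ c u` into effects
forces `e ∈ span {u}`; then `E` is trivial, hence a post-processing of `F`, hence equivalent to
`F`.
-/

open Finset

theorem IsEffect.unit_sub (hu : ∀ s ∈ S, u s = 1) {e : V →ₗ[ℝ] ℝ} (he : IsEffect S e) :
    IsEffect S (u - e) := fun s hs => by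
  obtain ⟨h₀, h₁⟩ := he s hs
  simp only [LinearMap.sub_apply, hu s hs]
  constructor <;> linarith

theorem exists_isEffect_of_isMinOn_of_isMaxOn (hu : ∀ s ∈ S, u s = 1) {e : V →ₗ[ℝ] ℝ}
    {s₀ s₁ : V} (hs₀ : s₀ ∈ S) (hs₁ : s₁ ∈ S) (hmin : IsMinOn e S s₀) (hmax : IsMaxOn e S s₁)
    (hlt : e s₀ < e s₁) :
    ∃ e' : V →ₗ[ℝ] ℝ, IsEffect S e' ∧ e' s₀ = 0 ∧ e' s₁ = 1 ∧
      e = e s₀ • u + (e s₁ - e s₀) • e' := by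
  have hd : e s₁ - e s₀ ≠ 0 := (sub_pos.2 hlt).ne'
  have he' : ∀ s ∈ S, ((e s₁ - e s₀)⁻¹ • (e - e s₀ • u)) s = (e s - e s₀) / (e s₁ - e s₀) :=
    fun s hs => by simp [hu s hs, div_eq_inv_mul]
  refine ⟨(e s₁ - e s₀)⁻¹ • (e - e s₀ • u), fun s hs => ?_, ?_, ?_, ?_⟩
  · rw [he' s hs]
    exact ⟨div_nonneg (sub_nonneg.2 (hmin hs)) (sub_pos.2 hlt).le,
      div_le_one_of_le₀ (sub_le_sub_right (hmax hs) _) (sub_pos.2 hlt).le⟩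
  · simp [he' s₀ hs₀]
  · simp [he' s₁ hs₁, hd]
  · rw [smul_smul, mul_inv_cancel₀ hd, one_smul]
    abel

namespace GObs

theorem PostProc.trans {A B C : GObs S u} (hAB : A.PostProc B) (hBC : B.PostProc C) :
    A.PostProc C := by
  obtain ⟨ν, hν₀, hν₁, hνB⟩ := hAB
  obtain ⟨μ, hμ₀, hμ₁, hμC⟩ := hBC
  refine ⟨fun x z => ∑ y, ν x y * μ y z,
    fun x z => sum_nonneg fun y _ => mul_nonneg (hν₀ x y) (hμ₀ y z), fun x => ?_, fun z => ?_⟩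
  · rw [sum_comm]
    simp [← mul_sum, hμ₁, hν₁]
  · simp only [hμC, hνB, smul_sum, smul_smul, sum_smul]
    rw [sum_comm]
    simp only [mul_comm]

theorem PostProc.simulable {A B : GObs S u} (h : B.PostProc A) : Simulable {B} A := by
  obtain ⟨ν, hν₀, hν₁, hνA⟩ := h
  exact ⟨1, fun _ => 1, fun _ => B, fun _ => ν, fun _ => zero_le_one, by simp, fun _ => rfl,
    fun _ => hν₀, fun _ => hν₁, by simpa using hνA⟩

theorem SimIrr.ppEquiv_of_postProc {A B : GObs S u} (hA : A.SimIrr) (h : B.PostProc A) :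
    A.PPEquiv B := by
  obtain ⟨B', hB', hAB'⟩ := hA {B} h.simulable
  rwa [Set.mem_singleton_iff.1 hB'] at hAB'

theorem SimIrr.postProc_of_compatible {A T : GObs S u} (hA : A.SimIrr) (h : T.Compatible A) :
    A.PostProc T := by
  obtain ⟨G, hGT, hGA⟩ := h
  exact (hA.ppEquiv_of_postProc hGA).1.trans hGT

theorem Trivial.postProc {T : GObs S u} (hT : T.Trivial) (B : GObs S u) : B.PostProc T := by
  obtain ⟨p, hp₀, hp₁, hpT⟩ := hT
  refine ⟨fun _ y => p y, fun _ => hp₀, fun _ => hp₁, fun y => ?_⟩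
  rw [hpT, ← smul_sum, B.sum_eq]

-- Reducible, so that `(ofEffect hu e he).n` unfolds to `2` where outcome types are compared.
abbrev ofEffect (hu : ∀ s ∈ S, u s = 1) (e : V →ₗ[ℝ] ℝ) (he : IsEffect S e) : GObs S u where
  n := 2
  eff := ![e, u - e]
  effect := Fin.forall_fin_two.2 ⟨he, he.unit_sub hu⟩
  sum_eq := by simp

theorem exists_eq_ofEffect (hu : ∀ s ∈ S, u s = 1) (E : GObs S u) (hn : E.n = 2) :
    ∃ e he, E = ofEffect hu e he := by
  obtain ⟨n, eff, heff, hsum⟩ := E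
  subst hn
  have h₁ : eff 1 = u - eff 0 := by
    rw [← hsum, Fin.sum_univ_two]
    abel
  refine ⟨eff 0, heff 0, ?_⟩
  simp only [ofEffect, mk.injEq, heq_eq_eq, true_and]
  ext i : 1
  fin_cases i <;> simp [h₁]

variable {hu : ∀ s ∈ S, u s = 1}

theorem ofEffect_postProc_iff {e : V →ₗ[ℝ] ℝ} {he : IsEffect S e} {A : GObs S u} :
    (ofEffect hu e he).PostProc A ↔ ∃ ν : Fin 2 → Fin A.n → ℝ, (∀ x y, 0 ≤ ν x y) ∧
      (∀ x, ∑ y, ν x y = 1) ∧ ∀ y, A.eff y = ν 0 y • e + ν 1 y • (u - e) := by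
  simp only [PostProc, ofEffect, Fin.sum_univ_two, Matrix.cons_val_zero, Matrix.cons_val_one]

theorem ofEffect_postProc_ofEffect {e g : V →ₗ[ℝ] ℝ} {he : IsEffect S e} {hg : IsEffect S g}
    {a b : ℝ} (ha₀ : 0 ≤ a) (ha₁ : a ≤ 1) (hb₀ : 0 ≤ b) (hb₁ : b ≤ 1)
    (h : g = a • e + b • (u - e)) : (ofEffect hu e he).PostProc (ofEffect hu g hg) := by
  refine ofEffect_postProc_iff.2 ⟨![![a, 1 - a], ![b, 1 - b]], ?_, ?_, ?_⟩
  · simp [Fin.forall_fin_two, ha₀, hb₀, ha₁, hb₁]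
  · simp [Fin.forall_fin_two]
  · simp only [h, Fin.forall_fin_two, Matrix.cons_val_zero, Matrix.cons_val_one,
      Matrix.cons_val_fin_one, true_and]
    module

theorem trivial_ofEffect_of_eq_smul (hS : S.Nonempty) {e : V →ₗ[ℝ] ℝ} {he : IsEffect S e}
    {c : ℝ} (h : e = c • u) : (ofEffect hu e he).Trivial := by
  obtain ⟨s, hs⟩ := hS
  have hc : e s = c := by simp [h, hu s hs]
  obtain ⟨hc₀, hc₁⟩ := hc ▸ he s hs
  refine ⟨![c, 1 - c], ?_, by simp, ?_⟩
  · simp [Fin.forall_fin_two, hc₀, hc₁]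
  · simp only [h, Fin.forall_fin_two, Matrix.cons_val_zero, Matrix.cons_val_one,
      Matrix.cons_val_fin_one, true_and]
    module

theorem SimIrr.ppEquiv_of_eq_smul (hS : S.Nonempty) {e : V →ₗ[ℝ] ℝ} {he : IsEffect S e}
    (hE : (ofEffect hu e he).SimIrr) {c : ℝ} (h : e = c • u) (B : GObs S u) :
    (ofEffect hu e he).PPEquiv B :=
  hE.ppEquiv_of_postProc ((trivial_ofEffect_of_eq_smul hS h).postProc B)

theorem simulable_ofEffect_of_eq_sum {m : ℕ} {p : Fin m → ℝ} (hp₀ : ∀ i, 0 ≤ p i)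
    (hp₁ : ∑ i, p i = 1) {g : Fin m → V →ₗ[ℝ] ℝ} (hg : ∀ i, IsEffect S (g i))
    {e : V →ₗ[ℝ] ℝ} {he : IsEffect S e} (h : e = ∑ i, p i • g i) :
    Simulable (Set.range fun i => ofEffect hu (g i) (hg i)) (ofEffect hu e he) := by
  refine ⟨m, p, fun i => ofEffect hu (g i) (hg i), fun _ x y => if x = y then (1 : ℝ) else 0,
    hp₀, hp₁, fun i => ⟨i, rfl⟩, fun _ _ _ => by positivity, fun _ x => by simp, ?_⟩
  rw [Fin.forall_fin_two]
  simp [ofEffect, h, smul_sub, sum_sub_distrib, ← sum_smul, hp₁]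

theorem SimIrr.exists_eq_smul_of_eqOn {e : V →ₗ[ℝ] ℝ} {he : IsEffect S e}
    (hE : (ofEffect hu e he).SimIrr) {s₀ : V} (hs₀ : s₀ ∈ S) (hconst : ∀ s ∈ S, e s = e s₀) :
    ∃ c : ℝ, e = c • u := by
  set c := e s₀
  obtain ⟨hc₀, hc₁⟩ := he s₀ hs₀
  have hg₀ : IsEffect S ((2 : ℝ) • e - c • u) := fun s hs => by
    simp only [LinearMap.sub_apply, LinearMap.smul_apply, hconst s hs, hu s hs, smul_eq_mul,
      mul_one]
    constructor <;> linarith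
  have hg₁ : IsEffect S (c • u) := fun s hs => by
    simpa [hu s hs] using And.intro hc₀ hc₁
  have hg : ∀ i, IsEffect S (![(2 : ℝ) • e - c • u, c • u] i) := Fin.forall_fin_two.2 ⟨hg₀, hg₁⟩
  obtain ⟨_, ⟨i, rfl⟩, hEi⟩ := hE _ (simulable_ofEffect_of_eq_sum (p := ![1 / 2, 1 / 2])
    (Fin.forall_fin_two.2 ⟨by norm_num, by norm_num⟩) (by norm_num) hg (by
      simp only [Fin.sum_univ_two, Matrix.cons_val_zero, Matrix.cons_val_one,
        Matrix.cons_val_fin_one]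
      module))
  fin_cases i
  · obtain ⟨ν, hν₀, hν₁, hν⟩ := ofEffect_postProc_iff.1 hEi.1
    have h₀ : (2 : ℝ) • e - c • u = ν 0 0 • e + ν 1 0 • (u - e) := by simpa using hν 0
    have hν₀₀ : ν 0 0 ≤ 1 := by
      linarith [hν₀ 0 1, show ν 0 0 + ν 0 1 = 1 by simpa [Fin.sum_univ_two] using hν₁ 0]
    have hd : 2 - ν 0 0 + ν 1 0 ≠ 0 := by linarith [hν₀ 1 0]
    refine ⟨(2 - ν 0 0 + ν 1 0)⁻¹ * (c + ν 1 0), ?_⟩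
    rw [mul_smul, eq_inv_smul_iff₀ hd]
    linear_combination (norm := module) h₀
  · obtain ⟨ν, -, -, hν⟩ := ofEffect_postProc_iff.1 hEi.2
    have h₀ : e = ν 0 0 • c • u + ν 1 0 • (u - c • u) := by simpa using hν 0
    refine ⟨ν 0 0 * c + ν 1 0 * (1 - c), ?_⟩
    linear_combination (norm := module) h₀

theorem ofEffect_postProc_of_eq_add_smul {e g : V →ₗ[ℝ] ℝ} {he : IsEffect S e}
    {hg : IsEffect S g} {s₀ s₁ : V} (hs₀ : s₀ ∈ S) (hs₁ : s₁ ∈ S) (he₀ : e s₀ = 0)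
    (he₁ : e s₁ = 1) {a b : ℝ} (h : g = a • u + b • e) :
    (ofEffect hu e he).PostProc (ofEffect hu g hg) := by
  have hg₀ : g s₀ = a := by simp [h, hu s₀ hs₀, he₀]
  have hg₁ : g s₁ = a + b := by simp [h, hu s₁ hs₁, he₁]
  refine ofEffect_postProc_ofEffect (hg s₁ hs₁).1 (hg s₁ hs₁).2 (hg s₀ hs₀).1 (hg s₀ hs₀).2 ?_
  rw [hg₀, hg₁, h]
  module

theorem SimIrr.ppEquiv_of_eq_add_smul {e f : V →ₗ[ℝ] ℝ} {he : IsEffect S e} {hf : IsEffect S f}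
    (hE : (ofEffect hu e he).SimIrr) (hF : (ofEffect hu f hf).SimIrr) {s₀ s₁ : V}
    (hs₀ : s₀ ∈ S) (hs₁ : s₁ ∈ S) (hmin : IsMinOn e S s₀) (hmax : IsMaxOn e S s₁) {a b : ℝ}
    (h : f = a • u + b • e) : (ofEffect hu e he).PPEquiv (ofEffect hu f hf) := by
  obtain hconst | hlt := (show e s₀ ≤ e s₁ from hmin hs₁).eq_or_lt
  · obtain ⟨c, hc⟩ := hE.exists_eq_smul_of_eqOn hs₀
      fun s hs => le_antisymm (hconst ▸ hmax hs) (hmin hs)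
    exact hE.ppEquiv_of_eq_smul ⟨s₀, hs₀⟩ hc _
  · obtain ⟨e', he', he'₀, he'₁, hee'⟩ :=
      exists_isEffect_of_isMinOn_of_isMaxOn hu hs₀ hs₁ hmin hmax hlt
    have hfe' : f = (a + b * e s₀) • u + (b * (e s₁ - e s₀)) • e' := by
      linear_combination (norm := module) h + b • hee'
    have hEe' := hE.ppEquiv_of_postProc
      (ofEffect_postProc_of_eq_add_smul (he := he') hs₀ hs₁ he'₀ he'₁ hee')
    have hFe' := hF.ppEquiv_of_postProc
      (hEe'.1.trans (ofEffect_postProc_of_eq_add_smul hs₀ hs₁ he'₀ he'₁ hfe'))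
    exact ⟨hFe'.2, hFe'.1⟩

theorem SimIrr.coeff_eq_zero_of_not_ppEquiv {V : Type*} [NormedAddCommGroup V]
    [NormedSpace ℝ V] [FiniteDimensional ℝ V] {S : Set V} {u : V →ₗ[ℝ] ℝ}
    {hu : ∀ s ∈ S, u s = 1} (hS : S.Nonempty) (hSc : IsCompact S) {e f : V →ₗ[ℝ] ℝ}
    {he : IsEffect S e} {hf : IsEffect S f} (hE : (ofEffect hu e he).SimIrr)
    (hF : (ofEffect hu f hf).SimIrr)
    (hEF : ¬ (ofEffect hu e he).PPEquiv (ofEffect hu f hf)) {α β γ : ℝ}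
    (h : α • u + β • e + γ • f = 0) : β = 0 := by
  by_contra hβ
  rcases eq_or_ne γ 0 with rfl | hγ
  · refine hEF (hE.ppEquiv_of_eq_smul hS (c := -α / β) ?_ _)
    rw [div_eq_inv_mul, mul_smul, eq_inv_smul_iff₀ hβ]
    linear_combination (norm := module) h
  · have hcont : ContinuousOn e S := (LinearMap.continuous_of_finiteDimensional e).continuousOn
    obtain ⟨s₀, hs₀, hmin⟩ := hSc.exists_isMinOn hS hcont
    obtain ⟨s₁, hs₁, hmax⟩ := hSc.exists_isMaxOn hS hcont
    refine hEF (hE.ppEquiv_of_eq_add_smul hF hs₀ hs₁ hmin hmax (a := -α / γ) (b := -β / γ) ?_)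
    rw [div_eq_inv_mul, div_eq_inv_mul, mul_smul, mul_smul, ← smul_add, eq_inv_smul_iff₀ hγ]
    linear_combination (norm := module) h

theorem trivial_of_ofEffect_postProc {e f : V →ₗ[ℝ] ℝ} {he : IsEffect S e} {hf : IsEffect S f}
    {T : GObs S u}
    (hindep : ∀ α β γ : ℝ, α • u + β • e + γ • f = 0 → β = 0)
    (hTe : (ofEffect hu e he).PostProc T) (hTf : (ofEffect hu f hf).PostProc T) : T.Trivial := by
  obtain ⟨ν, hν₀, hν₁, hν⟩ := ofEffect_postProc_iff.1 hTe
  obtain ⟨μ, -, -, hμ⟩ := ofEffect_postProc_iff.1 hTf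
  refine ⟨ν 1, hν₀ 1, hν₁ 1, fun y => ?_⟩
  have hνy : ν 0 y - ν 1 y = 0 := hindep (ν 1 y - μ 1 y) _ (μ 1 y - μ 0 y) (by
    linear_combination (norm := module) (hν y).symm.trans (hμ y))
  rw [hν y, sub_eq_zero.1 hνy]
  module

end GObs

theorem two_dichotomic_simIrr_implies_noFreeInformation_general
    {V : Type*} [NormedAddCommGroup V] [NormedSpace ℝ V] [FiniteDimensional ℝ V]
    (S : Set V) (hSne : S.Nonempty) (hScpt : IsCompact S)
    (u : V →ₗ[ℝ] ℝ) (hu : ∀ s ∈ S, u s = 1)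
    (E F : GObs S u) (hEn : E.n = 2) (hFn : F.n = 2)
    (hE : E.SimIrr) (hF : F.SimIrr) (hEF : ¬ E.PPEquiv F) :
    ∀ A : GObs S u, A.InT3 → A.Trivial := by
  intro A hA
  obtain ⟨e, he, rfl⟩ := GObs.exists_eq_ofEffect hu E hEn
  obtain ⟨f, hf, rfl⟩ := GObs.exists_eq_ofEffect hu F hFn
  exact GObs.trivial_of_ofEffect_postProc
    (fun _ _ _ => hE.coeff_eq_zero_of_not_ppEquiv hSne hScpt hF hEF)
    (hE.postProc_of_compatible (hA _)) (hF.postProc_of_compatible (hA _))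

/-- Prop. 10: if there are two post-processing inequivalent dichotomic
simulation irreducible observables `E` and `F` on `S`, then `T₁ = T₂ = T₃`: every
observable compatible with all observables is trivial. -/
theorem two_dichotomic_simIrr_implies_noFreeInformation
    {V : Type*} [NormedAddCommGroup V] [NormedSpace ℝ V] [FiniteDimensional ℝ V]
    (S : Set V) (hSne : S.Nonempty) (hScvx : Convex ℝ S) (hScpt : IsCompact S)
    (u : V →ₗ[ℝ] ℝ) (hu : ∀ s ∈ S, u s = 1)
    (E F : GObs S u) (hEn : E.n = 2) (hFn : F.n = 2)
    (hE : E.SimIrr) (hF : F.SimIrr) (hEF : ¬ E.PPEquiv F) :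
    ∀ A : GObs S u, A.InT3 → A.Trivial :=
  two_dichotomic_simIrr_implies_noFreeInformation_general S hSne hScpt u hu E F hEn hFn hE hF hEF
end

section
/- Let x_{i,1} be the intersection point of the line segments L_i = conv{g_i, g_{i+m}} and L_{i+1} = conv{g_{i+1}, g_{i+m+1}} among the 2m+1 indecomposable extreme effects g_k of the odd polygon state space S_{2m+1} (indices mod 2m+1). Then x_{i,1} = λ_1 g_i + (1−λ_1) g_{i+m} with λ_1 = (3σ_n − 1)/(2σ_n) where n = 2m+1, σ_n = 1/(1+r_n), r_n = sec(π/n), and the distance of x_{i,1} from the centroid (0,0,σ_n) equals σ_n r_n sin(π/(2n)). -/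
/-! With `n = 2m+1` and `a = π/n`, the effects `g_{i+m}`, `g_{i+1}`, `g_{i+m+1}` sit at the angles
`θ + π - a`, `θ + 2a`, `θ + π + a`, where `θ` is the angle of `g_i`, and `λ₁` simplifies to
`(2 cos a - 1)/(2 cos a)`. Writing `ζ = e^{iθ}`, `ω = e^{ia}`, the planar parts of
`λ g_i + (1-λ) g_{i+m}` and `(1-λ) g_{i+1} + λ g_{i+m+1}` differ by
`σ ζ (1 + ω) (2λ cos a - 2 cos a + 1)`, which vanishes at `λ = λ₁`. The law of cosines then gives
`|x - (0,0,σ)|² = σ² (1 - cos a) / (2 cos² a) = (σ r sin (a/2))²`. -/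

open Real

noncomputable section

/-- `r_n = sec(π/n)`. -/
def rPoly (n : ℕ) : ℝ := 1 / Real.cos (π / n)

/-- `σ_n = 1/(1 + r_n)`. -/
def sigmaPoly (n : ℕ) : ℝ := 1 / (1 + rPoly n)

/-- The indecomposable extreme effects of the polygon state space `S_n`,
`g_k = σ_n (cos(2kπ/n), sin(2kπ/n), 1)ᵀ`, lying on the plane `z = σ_n` in `ℝ³`.
(Indices are taken modulo `n`, which is automatic by periodicity.) -/
def gEff (n k : ℕ) : ℝ × ℝ × ℝ :=
  (sigmaPoly n * Real.cos (2 * k * π / n),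
   sigmaPoly n * Real.sin (2 * k * π / n),
   sigmaPoly n)

def conePoint (s θ : ℝ) : ℝ × ℝ × ℝ := (s * cos θ, s * sin θ, s)

lemma gEff_add {n i j : ℕ} {φ : ℝ} (hφ : 2 * (j : ℝ) * π / n = φ) :
    gEff n (i + j) = conePoint (sigmaPoly n) (2 * i * π / n + φ) := by
  simp only [gEff, conePoint, ← hφ]
  push_cast
  ring_nf

lemma half_le_cos_pi_div {n : ℕ} (hn : 3 ≤ n) : 1 / 2 ≤ cos (π / n) := by
  have hn' : (3 : ℝ) ≤ n := by exact_mod_cast hn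
  rw [← cos_pi_div_three]
  apply cos_le_cos_of_nonneg_of_le_pi (by positivity) (by linarith [pi_pos])
  exact div_le_div_of_nonneg_left pi_pos.le three_pos hn'

lemma sigmaPoly_eq {n : ℕ} (hc : cos (π / n) ≠ 0) :
    sigmaPoly n = cos (π / n) / (1 + cos (π / n)) := by
  rw [sigmaPoly, rPoly]
  field_simp
  ring_nf

lemma sigmaPoly_weight_mul_two_cos {n : ℕ} (hc : 0 < cos (π / n)) :
    (3 * sigmaPoly n - 1) / (2 * sigmaPoly n) * (2 * cos (π / n)) = 2 * cos (π / n) - 1 := by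
  rw [sigmaPoly_eq hc.ne']
  field_simp
  ring

lemma conePoint_segments_meet (s θ a lam : ℝ) (hlam : lam * (2 * cos a) = 2 * cos a - 1) :
    lam • conePoint s θ + (1 - lam) • conePoint s (θ + (π - a)) =
      (1 - lam) • conePoint s (θ + 2 * a) + lam • conePoint s (θ + (π + a)) := by
  simp only [conePoint, Prod.smul_mk, smul_eq_mul, Prod.mk_add_mk, Prod.mk.injEq]
  simp only [cos_add, sin_add, cos_sub, sin_sub, cos_pi, sin_pi, cos_two_mul, sin_two_mul]
  refine ⟨?_, ?_, by ring⟩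
  · linear_combination s * ((1 + cos a) * cos θ - sin a * sin θ) * hlam
  · linear_combination s * ((1 + cos a) * sin θ + sin a * cos θ) * hlam

lemma conePoint_combo_dist_sq (s θ φ lam : ℝ) (x : ℝ × ℝ × ℝ)
    (hx : x = lam • conePoint s θ + (1 - lam) • conePoint s φ) :
    x.1 ^ 2 + x.2.1 ^ 2 + (x.2.2 - s) ^ 2 =
      s ^ 2 * (lam ^ 2 + (1 - lam) ^ 2 + 2 * lam * (1 - lam) * cos (θ - φ)) := by
  subst hx
  simp only [conePoint, Prod.smul_mk, smul_eq_mul, Prod.mk_add_mk, cos_sub]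
  linear_combination s ^ 2 * lam ^ 2 * sin_sq_add_cos_sq θ +
    s ^ 2 * (1 - lam) ^ 2 * sin_sq_add_cos_sq φ

lemma conePoint_segments_meet_dist (s θ a lam : ℝ) (x : ℝ × ℝ × ℝ) (hs : 0 ≤ s)
    (hc : 0 < cos a) (ha₀ : 0 ≤ a) (ha : a ≤ 2 * π) (hlam : lam * (2 * cos a) = 2 * cos a - 1)
    (hx : x = lam • conePoint s θ + (1 - lam) • conePoint s (θ + (π - a))) :
    √(x.1 ^ 2 + x.2.1 ^ 2 + (x.2.2 - s) ^ 2) = s * (1 / cos a) * sin (a / 2) := by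
  have hdist : x.1 ^ 2 + x.2.1 ^ 2 + (x.2.2 - s) ^ 2 = (s / cos a) ^ 2 * ((1 - cos a) / 2) := by
    rw [conePoint_combo_dist_sq s θ _ lam x hx, show θ - (θ + (π - a)) = a - π by ring,
      cos_sub_pi, eq_div_of_mul_eq (by positivity) hlam]
    field_simp
    ring
  rw [hdist, sqrt_mul (sq_nonneg _), sqrt_sq (by positivity), sin_half_eq_sqrt ha₀ ha,
    div_eq_mul_one_div]

/-- for the odd polygon `S_{2m+1}` (`n = 2m+1`), the point
`x_{i,1} = λ₁ g_i + (1−λ₁) g_{i+m}` with `λ₁ = (3σ_n − 1)/(2σ_n)` lies on the segment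
`L_{i+1} = conv{g_{i+1}, g_{i+m+1}}` (hence is the intersection point `L_i ∩ L_{i+1}`),
and its Euclidean distance from the centroid `(0,0,σ_n)` equals `σ_n r_n sin(π/(2n))`. -/
theorem polygon_intersection_point (m i : ℕ) (hm : 1 ≤ m) :
    ∀ lam₁ : ℝ, lam₁ = (3 * sigmaPoly (2 * m + 1) - 1) / (2 * sigmaPoly (2 * m + 1)) →
    ∀ x : ℝ × ℝ × ℝ, x = lam₁ • gEff (2 * m + 1) i + (1 - lam₁) • gEff (2 * m + 1) (i + m) →
    (∃ t : ℝ, 0 ≤ t ∧ t ≤ 1 ∧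
        x = t • gEff (2 * m + 1) (i + 1) + (1 - t) • gEff (2 * m + 1) (i + m + 1)) ∧
    Real.sqrt (x.1 ^ 2 + x.2.1 ^ 2 + (x.2.2 - sigmaPoly (2 * m + 1)) ^ 2)
      = sigmaPoly (2 * m + 1) * rPoly (2 * m + 1) * Real.sin (π / (2 * (2 * m + 1))) := by
  intro lam₁ hlam x hx
  set n := 2 * m + 1 with hn
  set a := π / (n : ℝ) with ha
  have angle_m : 2 * (m : ℝ) * π / n = π - a := by
    rw [ha, hn]; push_cast; field_simp; ring
  have angle_one : 2 * ((1 : ℕ) : ℝ) * π / n = 2 * a := by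
    rw [ha]; push_cast; ring
  have angle_m_succ : 2 * ((m + 1 : ℕ) : ℝ) * π / n = π + a := by
    rw [ha, hn]; push_cast; field_simp; ring
  have hc : 1 / 2 ≤ cos a := half_le_cos_pi_div (by omega)
  have hlam' : lam₁ * (2 * cos a) = 2 * cos a - 1 :=
    hlam ▸ sigmaPoly_weight_mul_two_cos (by linarith)
  have hσ : 0 ≤ sigmaPoly n := by
    rw [sigmaPoly_eq (by linarith)]
    positivity
  have ha_le : a ≤ 2 * π := by
    linarith [div_le_self pi_pos.le (by simp [hn] : (1 : ℝ) ≤ n), pi_pos]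
  rw [gEff_add angle_m] at hx
  refine ⟨⟨1 - lam₁, by nlinarith, by nlinarith, ?_⟩, ?_⟩
  · rw [hx, sub_sub_cancel, gEff_add angle_one, add_assoc, gEff_add angle_m_succ]
    exact conePoint_segments_meet _ _ _ _ hlam'
  · rw [conePoint_segments_meet_dist _ _ _ _ x hσ (by linarith) (by positivity) ha_le hlam' hx,
      show π / (2 * (2 * (m : ℝ) + 1)) = a / 2 by rw [ha, hn, div_div]; push_cast; ring, rPoly]

end
end
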